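/- arXiv:1007.2612 — 6 statements merged into one kernel-verified Lean document; each statement's English description precedes it below -/
import Mathlib

section
/- Strong FWER control (Theorem 1): Under conditions (D1)–(D4) for the multiple decision process Δ and conditions (A1)–(A3) for the multiple decision size function A, for every probability measure P, every q ∈ [0,1], the multiple decision function δ†(q) = (δ_m(A_m(α†(q))) : m ∈ 𝓜) satisfies P(S₀(α†(q)) ≥ 1) ≤ q; that is, the probability of at least one false discovery is at most q. -/
/-!
Statement 0 (Peña–Habiger–Wu, Theorem 1): Strong FWER control.
Under (D1)–(D4) for the multiple decision process Δ = (δ_m) and (A1)–(A3) for the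
multiple decision size function A = (A_m), for every probability measure P and every
q ∈ [0,1], P(S₀(α†(q)) ≥ 1) ≤ q.
-/

open MeasureTheory ProbabilityTheory Function Set

noncomputable section

/-- The number of false discoveries `S₀(α) = ∑_{m ∈ 𝓜₀} δ_m(A_m(α))`. -/
def Szero {X ι : Type*} [Fintype ι] (M0 : Finset ι) (A : ι → ℝ → ℝ)
    (δ : ι → ℝ → X → ℝ) (α : ℝ) (x : X) : ℝ :=
  ∑ m ∈ M0, δ m (A m α) x

/-- The process `H₁(α) = ∏_{m ∈ 𝓜} (1 - A_m(α))^{1 - δ_m(A_m(α)-)}`, where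
`δ_m(A_m(α)-)` denotes the left-hand limit of the path `β ↦ δ_m(β)` at `A_m(α)`. -/
def Hone {X ι : Type*} [Fintype ι] (A : ι → ℝ → ℝ)
    (δ : ι → ℝ → X → ℝ) (α : ℝ) (x : X) : ℝ :=
  ∏ m, (1 - A m α) ^ (1 - Function.leftLim (fun β => δ m β x) (A m α))

/-- The first crossing time `α†(q) = inf {α ∈ [0,1] : H₁(α) < 1 - q}` (with `inf ∅ = 1`). -/
def alphaDag {X ι : Type*} [Fintype ι] (A : ι → ℝ → ℝ)
    (δ : ι → ℝ → X → ℝ) (q : ℝ) (x : X) : ℝ :=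
  sInf ({α ∈ Set.Icc (0:ℝ) 1 | Hone A δ α x < 1 - q} ∪ {1})

/-- The σ-algebra generated by the decision process `α ↦ δ_m(α)`, `α ∈ [0,1]`. -/
def procSigma {X : Type*} (δm : ℝ → X → ℝ) : MeasurableSpace X :=
  ⨆ α ∈ Set.Icc (0:ℝ) 1, MeasurableSpace.comap (δm α) Real.measurableSpace

/-!
Let `t` be the largest `α ∈ [0,1]` with `∏_{m ∈ 𝓜₀} (1 - A_m(α)) ≥ 1 - q`; it does not depend
on the data. Pathwise, whenever a true null is rejected at `α†(q)`, one is already rejected at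
`t`. Otherwise `α† > t`, and by right-continuity no true null is rejected up to `A_m(α)` for
some `α ∈ (t, α†)`; there `H₁(α)` is at most the null product `∏_{𝓜₀} (1 - A_m(α)) < 1 - q`,
so `α` would belong to the set whose infimum is `α†`. Hence the family-wise error is at most
`1 - P(no true null rejected at t) = 1 - ∏_{𝓜₀} (1 - A_m(t)) ≤ q`, by independence and (D4).
-/

open Filter Topology

lemma leftLim_le_of_eventually_le {α β : Type*} [LinearOrder α] [TopologicalSpace α]
    [OrderTopology α] [TopologicalSpace β] [Preorder β] [ClosedIicTopology β]
    {f : α → β} {a : α} [(𝓝[<] a).NeBot] {c : β} (ha : f a ≤ c)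
    (h : ∀ᶠ b in 𝓝[<] a, f b ≤ c) : leftLim f a ≤ c := by
  by_cases hlim : ∃ y, Tendsto f (𝓝[<] a) (𝓝 y)
  · exact le_of_tendsto (tendsto_leftLim_of_tendsto hlim) h
  · exact (leftLim_eq_of_not_tendsto f hlim).trans_le ha

section Paths

variable {f : ℝ → ℝ} {a : ℝ}

lemma one_sub_rpow_one_sub_leftLim_le_one (ha : a ∈ Icc (0:ℝ) 1)
    (hf : ∀ β ∈ Icc (0:ℝ) 1, f β ≤ 1) : (1 - a) ^ (1 - leftLim f a) ≤ 1 := by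
  -- at `a = 0` the left limit sees the path at negative levels, but the base is `1`
  rcases ha.1.eq_or_lt with rfl | ha0
  · simp
  refine Real.rpow_le_one (by linarith [ha.2]) (by linarith [ha.1]) (sub_nonneg.2 ?_)
  refine leftLim_le_of_eventually_le (hf a ha) ?_
  filter_upwards [Ioo_mem_nhdsLT ha0] with β hβ using hf β ⟨hβ.1.le, hβ.2.le.trans ha.2⟩

lemma one_sub_rpow_one_sub_leftLim_eq_of_forall_Ico_eq_zero (ha : 0 ≤ a)
    (hf : ∀ β ∈ Ico 0 a, f β = 0) : (1 - a) ^ (1 - leftLim f a) = 1 - a := by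
  rcases ha.eq_or_lt with rfl | ha0
  · simp
  have hlim : leftLim f a = 0 := leftLim_eq_of_tendsto <| tendsto_const_nhds.congr' <|
    eventuallyEq_of_mem (Ioo_mem_nhdsLT ha0) fun β hβ => (hf β ⟨hβ.1.le, hβ.2⟩).symm
  simp [hlim]

lemma eventually_forall_Icc_eq_zero (hmono : MonotoneOn f (Icc 0 1))
    (hvals : ∀ β ∈ Icc (0:ℝ) 1, f β = 0 ∨ f β = 1) (ha : a ∈ Ico (0:ℝ) 1)
    (hrc : ContinuousWithinAt f (Ici a) a) (hfa : f a = 0) :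
    ∀ᶠ c in 𝓝 a, ∀ β ∈ Icc 0 c, f β = 0 := by
  have hbelow : ∀ c ∈ Icc (0:ℝ) 1, f c = 0 → ∀ β ∈ Icc 0 c, f β = 0 := by
    intro c hc hfc β hβ
    have hβc : f β ≤ f c := hmono ⟨hβ.1, hβ.2.trans hc.2⟩ hc hβ.2
    exact (hvals β ⟨hβ.1, hβ.2.trans hc.2⟩).resolve_right (by linarith)
  rw [← nhdsLT_sup_nhdsGE, eventually_sup]
  constructor
  · filter_upwards [self_mem_nhdsWithin] with c hc β hβ
    exact hbelow a (Ico_subset_Icc_self ha) hfa β ⟨hβ.1, hβ.2.trans (le_of_lt hc)⟩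
  · filter_upwards [Ico_mem_nhdsGE ha.2, hrc.eventually (gt_mem_nhds (hfa ▸ zero_lt_one))]
      with c hc hfc
    have hcI : c ∈ Icc (0:ℝ) 1 := ⟨ha.1.trans hc.1, hc.2.le⟩
    exact hbelow c hcI ((hvals c hcI).resolve_right hfc.ne)

end Paths

section Crossing

variable {X ι : Type*} {M0 : Finset ι} {A : ι → ℝ → ℝ} {q α : ℝ}

def oracleLevel (M0 : Finset ι) (A : ι → ℝ → ℝ) (q : ℝ) : ℝ :=
  sSup {α ∈ Icc (0:ℝ) 1 | 1 - q ≤ ∏ m ∈ M0, (1 - A m α)}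

lemma le_oracleLevel (hα : α ∈ Icc (0:ℝ) 1) (h : 1 - q ≤ ∏ m ∈ M0, (1 - A m α)) :
    α ≤ oracleLevel M0 A q :=
  le_csSup ⟨1, fun _ hβ => hβ.1.2⟩ ⟨hα, h⟩

lemma oracleLevel_mem (hq : 0 ≤ q) (hA0 : ∀ m, A m 0 = 0)
    (hA : ∀ m, ContinuousOn (A m) (Icc 0 1)) :
    oracleLevel M0 A q ∈ {α ∈ Icc (0:ℝ) 1 | 1 - q ≤ ∏ m ∈ M0, (1 - A m α)} := by
  have hcont : ContinuousOn (fun α => ∏ m ∈ M0, (1 - A m α)) (Icc 0 1) :=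
    continuousOn_finsetProd M0 fun m _ => continuousOn_const.sub (hA m)
  have hclosed := hcont.preimage_isClosed_of_isClosed isClosed_Icc (isClosed_Ici (a := 1 - q))
  refine (isCompact_Icc.of_isClosed_subset hclosed inter_subset_left).sSup_mem
    ⟨0, left_mem_Icc.2 zero_le_one, ?_⟩
  simp [hA0, hq]

variable [Fintype ι] {δ : ι → ℝ → X → ℝ} {x : X}

lemma Hone_le_prod_of_forall_Icc_eq_zero (hA : ∀ m, A m α ∈ Icc (0:ℝ) 1)
    (hle : ∀ m, ∀ β ∈ Icc (0:ℝ) 1, δ m β x ≤ 1)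
    (hacc : ∀ m ∈ M0, ∀ β ∈ Icc 0 (A m α), δ m β x = 0) :
    Hone A δ α x ≤ ∏ m ∈ M0, (1 - A m α) :=
  calc Hone A δ α x
      ≤ ∏ m ∈ M0, (1 - A m α) ^ (1 - leftLim (fun β => δ m β x) (A m α)) :=
        Finset.prod_le_prod_of_subset_of_le_one M0.subset_univ
          (fun m _ => Real.rpow_nonneg (sub_nonneg.2 (hA m).2) _)
          (fun m _ _ => one_sub_rpow_one_sub_leftLim_le_one (hA m) (hle m))
    _ = ∏ m ∈ M0, (1 - A m α) := Finset.prod_congr rfl fun m hm =>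
        one_sub_rpow_one_sub_leftLim_eq_of_forall_Ico_eq_zero (hA m).1 fun β hβ =>
          hacc m hm β (Ico_subset_Icc_self hβ)

lemma bddBelow_alphaDag_set :
    BddBelow ({α ∈ Icc (0:ℝ) 1 | Hone A δ α x < 1 - q} ∪ {1}) :=
  ⟨0, by rintro β (hβ | rfl); exacts [hβ.1.1, zero_le_one]⟩

lemma alphaDag_mem_Icc : alphaDag A δ q x ∈ Icc (0:ℝ) 1 :=
  ⟨le_csInf ⟨1, Or.inr rfl⟩ (by rintro β (hβ | rfl); exacts [hβ.1.1, zero_le_one]),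
    csInf_le bddBelow_alphaDag_set (Or.inr rfl)⟩

lemma le_Hone_of_lt_alphaDag (hα : α ∈ Icc (0:ℝ) 1) (hlt : α < alphaDag A δ q x) :
    1 - q ≤ Hone A δ α x := by
  by_contra! h
  exact hlt.not_ge (csInf_le bddBelow_alphaDag_set (Or.inl ⟨hα, h⟩))

lemma exists_null_rejection_at_oracleLevel
    (hvals : ∀ m, ∀ β ∈ Icc (0:ℝ) 1, δ m β x = 0 ∨ δ m β x = 1)
    (hmono : ∀ m, MonotoneOn (fun β => δ m β x) (Icc 0 1))
    (hrc : ∀ m, ∀ β ∈ Ico (0:ℝ) 1, ContinuousWithinAt (fun γ => δ m γ x) (Ici β) β)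
    (hArange : ∀ m, ∀ α ∈ Icc (0:ℝ) 1, A m α ∈ Icc (0:ℝ) 1)
    (hA1 : ∀ m, A m 0 = 0 ∧ A m 1 = 1)
    (hA2 : ∀ m, ContinuousOn (A m) (Icc 0 1) ∧ StrictMonoOn (A m) (Icc 0 1)) (hq : 0 ≤ q)
    (hS : 1 ≤ Szero M0 A δ (alphaDag A δ q x) x) :
    ∃ m ∈ M0, δ m (A m (oracleLevel M0 A q)) x = 1 := by
  obtain ⟨htI, -⟩ := oracleLevel_mem hq (fun m => (hA1 m).1) (fun m => (hA2 m).1)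
  set t := oracleLevel M0 A q
  set ad := alphaDag A δ q x
  have hadI : ad ∈ Icc (0:ℝ) 1 := alphaDag_mem_Icc
  by_contra! hrej
  have hacc : ∀ m ∈ M0, δ m (A m t) x = 0 := fun m hm =>
    (hvals m _ (hArange m t htI)).resolve_right (hrej m hm)
  rcases le_or_gt ad t with hle | hlt
  · obtain ⟨m, hm, hne⟩ := Finset.exists_ne_zero_of_sum_ne_zero
      (show Szero M0 A δ ad x ≠ 0 by linarith)
    have hmono_t : δ m (A m ad) x ≤ δ m (A m t) x := hmono m (hArange m ad hadI)
      (hArange m t htI) ((hA2 m).2.monotoneOn hadI htI hle)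
    have hrej_ad : δ m (A m ad) x = 1 := (hvals m _ (hArange m ad hadI)).resolve_left hne
    linarith [hacc m hm]
  · have hev : ∀ m ∈ M0, ∀ᶠ α in 𝓝[Ioo t ad] t, ∀ β ∈ Icc 0 (A m α), δ m β x = 0 := by
      intro m hm
      have hAt : A m t ∈ Ico (0:ℝ) 1 := ⟨(hArange m t htI).1,
        ((hA2 m).2 htI (right_mem_Icc.2 zero_le_one) (hlt.trans_le hadI.2)).trans_eq (hA1 m).2⟩
      have hzero := eventually_forall_Icc_eq_zero (hmono m) (hvals m) hAt (hrc m _ hAt) (hacc m hm)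
      exact (((hA2 m).1 t htI).tendsto.eventually hzero).filter_mono
        (nhdsWithin_mono _ (Ioo_subset_Icc_self.trans (Icc_subset_Icc htI.1 hadI.2)))
    have := left_nhdsWithin_Ioo_neBot hlt
    obtain ⟨α, hαacc, hα⟩ :=
      (((eventually_all_finset M0).2 hev).and self_mem_nhdsWithin).exists
    have hαI : α ∈ Icc (0:ℝ) 1 := ⟨htI.1.trans hα.1.le, hα.2.le.trans hadI.2⟩
    refine hα.1.not_ge (le_oracleLevel hαI ((le_Hone_of_lt_alphaDag hαI hα.2).trans ?_))
    exact Hone_le_prod_of_forall_Icc_eq_zero (fun m => hArange m α hαI)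
      (fun m β hβ => (hvals m β hβ).elim (·.trans_le zero_le_one) le_of_eq) hαacc

end Crossing

lemma measurable_procSigma {X : Type*} {δm : ℝ → X → ℝ} {α : ℝ} (hα : α ∈ Icc (0:ℝ) 1) :
    Measurable[procSigma δm] (δm α) :=
  measurable_iff_comap_le.2 <| le_iSup₂
    (f := fun α (_ : α ∈ Icc (0:ℝ) 1) => MeasurableSpace.comap (δm α) Real.measurableSpace) α hα

section Probability

variable {X : Type*} [MeasurableSpace X] {μ : Measure X} [IsProbabilityMeasure μ]

lemma measure_setOf_eq_zero_of_zero_or_one {f : X → ℝ} (hf : Measurable f)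
    (h01 : ∀ x, f x = 0 ∨ f x = 1) :
    μ {x | f x = 0} = ENNReal.ofReal (1 - ∫ x, f x ∂μ) := by
  have hmeas : MeasurableSet {x | f x = 1} := hf (measurableSet_singleton 1)
  have hcompl : {x | f x = 0} = {x | f x = 1}ᶜ := by
    ext x; rcases h01 x with h | h <;> simp [h]
  have hint : ∫ x, f x ∂μ = μ.real {x | f x = 1} := by
    rw [← integral_indicator_one hmeas]
    congr 1; ext x; rcases h01 x with h | h <;> simp [h]
  rw [hcompl, prob_compl_eq_one_sub hmeas, hint, ENNReal.ofReal_sub _ measureReal_nonneg,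
    ENNReal.ofReal_one, ofReal_measureReal]

lemma measure_iInter_setOf_eq_zero_of_iIndep {κ : Type*} [Fintype κ]
    {σ : κ → MeasurableSpace X} (hind : iIndep σ μ) {f : κ → X → ℝ}
    (hfσ : ∀ i, Measurable[σ i] (f i)) (hf : ∀ i, Measurable (f i))
    (h01 : ∀ i x, f i x = 0 ∨ f i x = 1) :
    μ (⋂ i, {x | f i x = 0}) = ∏ i, ENNReal.ofReal (1 - ∫ x, f i x ∂μ) := by
  rw [hind.meas_iInter (s := fun i => {x | f i x = 0}) fun i => hfσ i (measurableSet_singleton 0)]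
  exact Finset.prod_congr rfl fun i _ => measure_setOf_eq_zero_of_zero_or_one (hf i) (h01 i)

end Probability

theorem fwer_strong_control_general
    {X ι : Type*} [MeasurableSpace X] [Fintype ι]
    (P : Measure X) [IsProbabilityMeasure P]
    -- the partition 𝓜 = 𝓜₀(P) ∪ 𝓜₁(P)
    (M0 : Finset ι)
    -- the multiple decision process Δ and the size function A
    (δ : ι → ℝ → X → ℝ) (A : ι → ℝ → ℝ)
    (hmeas : ∀ m, ∀ α ∈ Set.Icc (0:ℝ) 1, Measurable (δ m α))
    (hvals : ∀ m, ∀ α ∈ Set.Icc (0:ℝ) 1, ∀ x, δ m α x = 0 ∨ δ m α x = 1)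
    -- (D2): nondecreasing right-continuous {0,1}-valued paths
    (hD2 : ∀ᵐ x ∂P, ∀ m, MonotoneOn (fun α => δ m α x) (Set.Icc 0 1) ∧
      ∀ α ∈ Set.Ico (0:ℝ) 1, ContinuousWithinAt (fun β => δ m β x) (Set.Ici α) α)
    -- (D3): the null and alternative families are independent of each other,
    -- and the null processes are mutually independent
    (hD3b : iIndep (fun m : {m // m ∈ M0} => procSigma (δ (m : ι))) P)
    -- (D4): each null decision function has exact size α
    (hD4 : ∀ m ∈ M0, ∀ α ∈ Set.Icc (0:ℝ) 1, ∫ x, δ m α x ∂P = α)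
    -- (A1)–(A3)
    (hArange : ∀ m, ∀ α ∈ Set.Icc (0:ℝ) 1, A m α ∈ Set.Icc (0:ℝ) 1)
    (hA1 : ∀ m, A m 0 = 0 ∧ A m 1 = 1)
    (hA2 : ∀ m, ContinuousOn (A m) (Set.Icc 0 1) ∧ StrictMonoOn (A m) (Set.Icc 0 1))
    (q : ℝ) (hq : q ∈ Set.Icc (0:ℝ) 1) :
    P {x | 1 ≤ Szero M0 A δ (alphaDag A δ q x) x} ≤ ENNReal.ofReal q := by
  obtain ⟨htI, htprod⟩ := oracleLevel_mem hq.1 (fun m => (hA1 m).1) (fun m => (hA2 m).1)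
  set t := oracleLevel M0 A q
  have hAt : ∀ m, A m t ∈ Icc (0:ℝ) 1 := fun m => hArange m t htI
  set accept : M0 → Set X := fun m => {x | δ m (A m t) x = 0}
  have haccept : ∀ m, MeasurableSet (accept m) := fun m =>
    hmeas m _ (hAt m) (measurableSet_singleton 0)
  have herr : {x | 1 ≤ Szero M0 A δ (alphaDag A δ q x) x} ≤ᵐ[P] (⋂ m, accept m)ᶜ := by
    filter_upwards [hD2] with x hx hS
    obtain ⟨m, hm, hrej⟩ := exists_null_rejection_at_oracleLevel (fun m β hβ => hvals m β hβ x)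
      (fun m => (hx m).1) (fun m => (hx m).2) hArange hA1 hA2 hq.1 hS
    intro hacc
    have h0 : δ m (A m t) x = 0 := mem_iInter.1 hacc ⟨m, hm⟩
    exact one_ne_zero (hrej.symm.trans h0)
  have hnone : P (⋂ m, accept m) = ENNReal.ofReal (∏ m ∈ M0, (1 - A m t)) := by
    rw [measure_iInter_setOf_eq_zero_of_iIndep hD3b (fun m => measurable_procSigma (hAt m))
      (fun m => hmeas m _ (hAt m)) (fun m => hvals m _ (hAt m)),
      ENNReal.ofReal_prod_of_nonneg (fun m _ => sub_nonneg.2 (hAt m).2), ← Finset.prod_coe_sort M0]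
    exact Finset.prod_congr rfl fun m _ => by rw [hD4 m m.2 _ (hAt m)]
  calc P {x | 1 ≤ Szero M0 A δ (alphaDag A δ q x) x}
      ≤ P (⋂ m, accept m)ᶜ := measure_mono_ae herr
    _ = ENNReal.ofReal (1 - ∏ m ∈ M0, (1 - A m t)) := by
      rw [prob_compl_eq_one_sub (.iInter haccept),
        hnone, ENNReal.ofReal_sub _ (Finset.prod_nonneg fun m _ => sub_nonneg.2 (hAt m).2),
        ENNReal.ofReal_one]
    _ ≤ ENNReal.ofReal q := ENNReal.ofReal_le_ofReal (by linarith)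

/-- **Theorem 1 (strong FWER control).** -/
theorem fwer_strong_control
    {X ι : Type*} [MeasurableSpace X] [Fintype ι] [DecidableEq ι] [Nonempty ι]
    (P : Measure X) [IsProbabilityMeasure P]
    -- the partition 𝓜 = 𝓜₀(P) ∪ 𝓜₁(P)
    (M0 M1 : Finset ι) (hpart : M0 ∪ M1 = Finset.univ) (hdisj : Disjoint M0 M1)
    -- the multiple decision process Δ and the size function A
    (δ : ι → ℝ → X → ℝ) (A : ι → ℝ → ℝ)
    (hmeas : ∀ m, ∀ α ∈ Set.Icc (0:ℝ) 1, Measurable (δ m α))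
    (hvals : ∀ m, ∀ α ∈ Set.Icc (0:ℝ) 1, ∀ x, δ m α x = 0 ∨ δ m α x = 1)
    -- (D1)
    (hD1 : ∀ m, ∀ᵐ x ∂P, δ m 0 x = 0 ∧ δ m 1 x = 1)
    -- (D2): nondecreasing right-continuous {0,1}-valued paths
    (hD2 : ∀ᵐ x ∂P, ∀ m, MonotoneOn (fun α => δ m α x) (Set.Icc 0 1) ∧
      ∀ α ∈ Set.Ico (0:ℝ) 1, ContinuousWithinAt (fun β => δ m β x) (Set.Ici α) α)
    -- (D3): the null and alternative families are independent of each other,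
    -- and the null processes are mutually independent
    (hD3a : Indep (⨆ m ∈ M0, procSigma (δ m)) (⨆ m ∈ M1, procSigma (δ m)) P)
    (hD3b : iIndep (fun m : {m // m ∈ M0} => procSigma (δ (m : ι))) P)
    -- (D4): each null decision function has exact size α
    (hD4 : ∀ m ∈ M0, ∀ α ∈ Set.Icc (0:ℝ) 1, ∫ x, δ m α x ∂P = α)
    -- (A1)–(A3)
    (hArange : ∀ m, ∀ α ∈ Set.Icc (0:ℝ) 1, A m α ∈ Set.Icc (0:ℝ) 1)
    (hA1 : ∀ m, A m 0 = 0 ∧ A m 1 = 1)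
    (hA2 : ∀ m, ContinuousOn (A m) (Set.Icc 0 1) ∧ StrictMonoOn (A m) (Set.Icc 0 1))
    (hA3 : ∀ α ∈ Set.Icc (0:ℝ) 1, 1 - α ≤ ∏ m, (1 - A m α))
    (q : ℝ) (hq : q ∈ Set.Icc (0:ℝ) 1) :
    P {x | 1 ≤ Szero M0 A δ (alphaDag A δ q x) x} ≤ ENNReal.ofReal q :=
  fwer_strong_control_general P M0 δ A hmeas hvals hD2 hD3b hD4 hArange hA1 hA2 q hq

end
end

section
/- FDR control (Theorem 2): Under conditions (D1)–(D4) for the multiple decision process Δ and conditions (A1)–(A4) for the multiple decision size function A, for every probability measure P and every q ∈ [0,1], the multiple decision function δ*(q) = (δ_m(A_m(α*(q))) : m ∈ 𝓜) satisfies E_P[F(α*(q))] ≤ q; that is, the false discovery rate is at most q. -/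
/-!
Let `c_k = sup {α ∈ [0,1] : ∑_m A_m(α) ≤ q k}`. For almost every `x` the paths are monotone and
vanish at `0`, and then `α*(q) = c_K` for the step-up index `K = max {k ≤ |𝓜| : S(c_k) ≥ k}`, so
`∑_m A_m(c_K) ≤ q K ≤ q S(c_K)`. Together with (A4) this bounds the false discovery proportion by
`q / |𝓜₀| · ∑_{m ∈ 𝓜₀} δ_m(A_m(c_K)) / A_m(c_K)`. For a null `m`, the index `K_m` obtained by
counting `δ_m` as a rejection equals `K` whenever `δ_m(A_m(c_K)) = 1`, and it is a function of the
other processes only. By (D3) and (D4), given `K_m = k` the event `δ_m(A_m(c_k)) = 1` still has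
probability `A_m(c_k)`, so each summand has expectation at most `1`.
-/

open MeasureTheory ProbabilityTheory Function Set

noncomputable section

/-- The total number of discoveries `S(α) = ∑_{m ∈ 𝓜} δ_m(A_m(α))`. -/
def Stot {X ι : Type*} [Fintype ι] (A : ι → ℝ → ℝ)
    (δ : ι → ℝ → X → ℝ) (α : ℝ) (x : X) : ℝ :=
  ∑ m, δ m (A m α) x

/-- The false discovery proportion `F(α) = (S₀(α)/S(α))·I{S(α) > 0}` (with `0/0 = 0`). -/
def Fprop {X ι : Type*} [Fintype ι] (M0 : Finset ι) (A : ι → ℝ → ℝ)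
    (δ : ι → ℝ → X → ℝ) (α : ℝ) (x : X) : ℝ :=
  if 0 < Stot A δ α x then Szero M0 A δ α x / Stot A δ α x else 0

/-- The last crossing time `α*(q) = sup {α ∈ [0,1] : ∑_m A_m(α) ≤ q·S(α)}`. -/
def alphaStar {X ι : Type*} [Fintype ι] (A : ι → ℝ → ℝ)
    (δ : ι → ℝ → X → ℝ) (q : ℝ) (x : X) : ℝ :=
  sSup (insert 0 {α ∈ Set.Icc (0:ℝ) 1 | ∑ m, A m α ≤ q * Stot A δ α x})

namespace ProbabilityTheory

theorem Indep.indep_sup_of_indep_sup {Ω : Type*} {mΩ : MeasurableSpace Ω} {μ : Measure Ω}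
    [IsProbabilityMeasure μ] {m₁ m₂ m₃ : MeasurableSpace Ω} (h₁ : m₁ ≤ mΩ) (h₂ : m₂ ≤ mΩ)
    (h₃ : m₃ ≤ mΩ) (h₁₂ : Indep m₁ m₂ μ) (h₁₂₃ : Indep (m₁ ⊔ m₂) m₃ μ) :
    Indep m₁ (m₂ ⊔ m₃) μ := by
  set p : Set (Set Ω) := image2 (· ∩ ·) {s | MeasurableSet[m₂] s} {s | MeasurableSet[m₃] s}
  have hp : IsPiSystem p := by
    rintro - ⟨B₁, hB₁, C₁, hC₁, rfl⟩ - ⟨B₂, hB₂, C₂, hC₂, rfl⟩ -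
    exact ⟨B₁ ∩ B₂, hB₁.inter hB₂, C₁ ∩ C₂, hC₁.inter hC₂, inter_inter_inter_comm _ _ _ _⟩
  have hgen : m₂ ⊔ m₃ = MeasurableSpace.generateFrom p := by
    refine le_antisymm (sup_le ?_ ?_) (MeasurableSpace.generateFrom_le ?_)
    · exact fun B hB => MeasurableSpace.measurableSet_generateFrom
        ⟨B, hB, univ, MeasurableSet.univ, inter_univ B⟩
    · exact fun C hC => MeasurableSpace.measurableSet_generateFrom
        ⟨univ, MeasurableSet.univ, C, hC, univ_inter C⟩
    · rintro - ⟨B, hB, C, hC, rfl⟩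
      exact (le_sup_left (a := m₂) _ hB).inter (le_sup_right (a := m₂) _ hC)
  refine IndepSets.indep h₁ (sup_le h₂ h₃) (@MeasurableSpace.isPiSystem_measurableSet Ω m₁) hp
    (@MeasurableSpace.generateFrom_measurableSet Ω m₁).symm hgen ?_
  rw [IndepSets_iff]
  rintro s - hs ⟨B, hB, C, hC, rfl⟩
  rw [Indep_iff] at h₁₂ h₁₂₃
  have hsB : MeasurableSet[m₁ ⊔ m₂] (s ∩ B) :=
    (le_sup_left (a := m₁) _ hs).inter (le_sup_right (a := m₁) _ hB)
  rw [← inter_assoc, h₁₂₃ _ _ hsB hC, h₁₂₃ _ _ (le_sup_right (a := m₁) _ hB) hC, h₁₂ _ _ hs hB,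
    mul_assoc]

theorem integral_indicator_div_le_one {Ω : Type*} {mΩ : MeasurableSpace Ω}
    {μ : Measure Ω} [IsProbabilityMeasure μ] {m₁ m₂ : MeasurableSpace Ω} (hm₁ : m₁ ≤ mΩ)
    (hm₂ : m₂ ≤ mΩ) (hind : Indep m₁ m₂ μ) {D : ℕ → Set Ω} (hD : ∀ k, MeasurableSet[m₁] (D k))
    {Y : Ω → ℕ} (hY : Measurable[m₂] Y) {N : ℕ} (hYN : ∀ ω, Y ω ≤ N) {a : ℕ → ℝ}
    (ha : ∀ k, μ.real (D k) = a k) :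
    Integrable (fun ω => (D (Y ω)).indicator 1 ω / a (Y ω)) μ ∧
      ∫ ω, (D (Y ω)).indicator 1 ω / a (Y ω) ∂μ ≤ 1 := by
  obtain rfl : a = fun k => μ.real (D k) := funext fun k => (ha k).symm
  have hmeas : ∀ k, MeasurableSet[mΩ] (D k ∩ Y ⁻¹' {k}) :=
    fun k => (hm₁ _ (hD k)).inter (hm₂ _ (hY (measurableSet_singleton k)))
  have hint : ∀ k, Integrable ((D k ∩ Y ⁻¹' {k}).indicator fun _ => (μ.real (D k))⁻¹) μ :=
    fun k => (integrable_const _).indicator (hmeas k)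
  have hrepr : (fun ω => (D (Y ω)).indicator 1 ω / μ.real (D (Y ω))) = fun ω =>
      ∑ k ∈ Finset.range (N + 1), (D k ∩ Y ⁻¹' {k}).indicator (fun _ => (μ.real (D k))⁻¹) ω := by
    funext ω
    rw [Finset.sum_eq_single_of_mem (Y ω) (Finset.mem_range.2 (Nat.lt_succ_of_le (hYN ω)))]
    · by_cases hω : ω ∈ D (Y ω) <;> simp [hω]
    · exact fun k _ hk => indicator_of_notMem (fun h => hk h.2.symm) _
  rw [hrepr]
  refine ⟨integrable_finsetSum _ fun k _ => hint k, ?_⟩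
  rw [integral_finsetSum _ fun k _ => hint k]
  calc ∑ k ∈ Finset.range (N + 1),
        ∫ ω, (D k ∩ Y ⁻¹' {k}).indicator (fun _ => (μ.real (D k))⁻¹) ω ∂μ
      = ∑ k ∈ Finset.range (N + 1), μ.real (Y ⁻¹' {k}) * (μ.real (D k) * (μ.real (D k))⁻¹) := by
        refine Finset.sum_congr rfl fun k _ => ?_
        rw [integral_indicator_const _ (hmeas k), smul_eq_mul, measureReal_def, measureReal_def,
          measureReal_def, (Indep_iff _ _ _).1 hind _ _ (hD k) (hY (measurableSet_singleton k)),
          ENNReal.toReal_mul]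
        ring
    _ ≤ ∑ k ∈ Finset.range (N + 1), μ.real (Y ⁻¹' {k}) :=
        Finset.sum_le_sum fun k _ => mul_le_of_le_one_right measureReal_nonneg mul_inv_le_one
    _ = μ.real (Y ⁻¹' ↑(Finset.range (N + 1))) :=
        sum_measureReal_preimage_singleton _ fun k _ => hm₂ _ (hY (measurableSet_singleton k))
    _ ≤ 1 := measureReal_le_one

end ProbabilityTheory

theorem one_div_le_div_mul_one_div {S T a n q : ℝ} (hS : 0 < S) (ha : 0 < a) (hn : 1 ≤ n)
    (hq : 0 ≤ q) (hnT : n * a ≤ T) (hTS : T ≤ q * S) : 1 / S ≤ q / n * (1 / a) := by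
  have hT : 0 < T := (mul_pos (by linarith) ha).trans_le hnT
  calc 1 / S ≤ q / T := by
        rw [div_le_div_iff₀ hS hT, one_mul]
        exact hTS
    _ ≤ q / (n * a) := div_le_div_of_nonneg_left hq (by positivity) hnT
    _ = q / n * (1 / a) := by rw [div_mul_div_comm, mul_one]

def sublevelSup (f : ℝ → ℝ) (t : ℝ) : ℝ := sSup {α ∈ Icc (0:ℝ) 1 | f α ≤ t}

theorem le_sublevelSup {f : ℝ → ℝ} {t α : ℝ} (hα : α ∈ Icc (0:ℝ) 1) (h : f α ≤ t) :
    α ≤ sublevelSup f t :=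
  le_csSup ⟨1, fun _ hβ => hβ.1.2⟩ ⟨hα, h⟩

theorem sublevelSup_mem {f : ℝ → ℝ} {t : ℝ} (hf : ContinuousOn f (Icc 0 1)) (h0 : f 0 ≤ t) :
    sublevelSup f t ∈ {α ∈ Icc (0:ℝ) 1 | f α ≤ t} :=
  (hf.preimage_isClosed_of_isClosed isClosed_Icc isClosed_Iic).csSup_mem
    ⟨0, left_mem_Icc.2 zero_le_one, h0⟩ ⟨1, fun _ hβ => hβ.1.2⟩

theorem sublevelSup_mono {f : ℝ → ℝ} {t s : ℝ} (hf : ContinuousOn f (Icc 0 1)) (h0 : f 0 ≤ t)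
    (hts : t ≤ s) : sublevelSup f t ≤ sublevelSup f s :=
  le_sublevelSup (sublevelSup_mem hf h0).1 ((sublevelSup_mem hf h0).2.trans hts)

theorem sSup_insert_zero_eq_sublevelSup_findGreatest {f S : ℝ → ℝ} {q : ℝ} {n : ℕ}
    (hf : ContinuousOn f (Icc 0 1)) (hf0 : f 0 ≤ 0) (hq : 0 ≤ q)
    (hS : MonotoneOn S (Icc 0 1)) (hSn : ∀ α ∈ Icc (0:ℝ) 1, ∃ k ≤ n, S α = k) :
    sSup (insert 0 {α ∈ Icc (0:ℝ) 1 | f α ≤ q * S α}) =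
      sublevelSup f (q * Nat.findGreatest (fun k => (k : ℝ) ≤ S (sublevelSup f (q * k))) n) := by
  set c : ℕ → ℝ := fun k => sublevelSup f (q * k)
  have hc : ∀ k : ℕ, c k ∈ {α ∈ Icc (0:ℝ) 1 | f α ≤ q * k} :=
    fun k => sublevelSup_mem hf (hf0.trans (by positivity))
  set K := Nat.findGreatest (fun k => (k : ℝ) ≤ S (c k)) n
  have hK : (K : ℝ) ≤ S (c K) := by
    obtain ⟨k, -, hk⟩ := hSn _ (hc 0).1
    exact Nat.findGreatest_spec (P := fun k => (k : ℝ) ≤ S (c k)) (Nat.zero_le n)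
      (by rw [Nat.cast_zero, hk]; positivity)
  have hub : ∀ β ∈ insert 0 {α ∈ Icc (0:ℝ) 1 | f α ≤ q * S α}, β ≤ c K := by
    rintro β (rfl | ⟨hβ, hfβ⟩)
    · exact (hc K).1.1
    · obtain ⟨k, hkn, hSk⟩ := hSn β hβ
      have hβk : β ≤ c k := le_sublevelSup hβ (hSk ▸ hfβ)
      have hkK : k ≤ K := Nat.le_findGreatest hkn (hSk ▸ hS hβ (hc k).1 hβk)
      exact hβk.trans (sublevelSup_mono hf (hf0.trans (by positivity))
        (mul_le_mul_of_nonneg_left (Nat.cast_le.2 hkK) hq))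
  exact le_antisymm (csSup_le (insert_nonempty _ _) hub) (le_csSup ⟨_, hub⟩
    (mem_insert_of_mem _ ⟨(hc K).1, (hc K).2.trans (mul_le_mul_of_nonneg_left hK hq)⟩))

theorem findGreatest_le_add_one_eq_of_eq_one {n : ℕ} {S d s : ℕ → ℝ} (hS : ∀ k, S k = d k + s k)
    (hd : Monotone d) (hd1 : ∀ k, d k ≤ 1)
    (hK : d (Nat.findGreatest (fun k => (k : ℝ) ≤ S k) n) = 1) :
    Nat.findGreatest (fun k => (k : ℝ) ≤ s k + 1) n =
      Nat.findGreatest (fun k => (k : ℝ) ≤ S k) n := by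
  set K := Nat.findGreatest (fun k => (k : ℝ) ≤ S k) n
  set K' := Nat.findGreatest (fun k => (k : ℝ) ≤ s k + 1) n
  have hKK' : K ≤ K' := Nat.findGreatest_mono_left (fun k hk => by linarith [hS k, hd1 k]) n
  refine le_antisymm ?_ hKK'
  rcases Nat.eq_zero_or_pos K' with h0 | hpos
  · exact h0 ▸ Nat.zero_le K
  have hK' : (K' : ℝ) ≤ s K' + 1 := Nat.findGreatest_spec (P := fun k => (k : ℝ) ≤ s k + 1)
    (Nat.findGreatest_le n) (Nat.findGreatest_of_ne_zero rfl hpos.ne')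
  exact Nat.le_findGreatest (Nat.findGreatest_le n) (by linarith [hd hKK', hS K'])

theorem comap_le_procSigma {X : Type*} {δm : ℝ → X → ℝ} {α : ℝ} (hα : α ∈ Icc (0:ℝ) 1) :
    MeasurableSpace.comap (δm α) Real.measurableSpace ≤ procSigma δm :=
  le_iSup₂ (f := fun α (_ : α ∈ Icc (0:ℝ) 1) => MeasurableSpace.comap (δm α) _) α hα

theorem procSigma_le {X : Type*} [mX : MeasurableSpace X] {δm : ℝ → X → ℝ}
    (hδm : ∀ α ∈ Icc (0:ℝ) 1, Measurable (δm α)) : procSigma δm ≤ mX :=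
  iSup₂_le fun α hα => (hδm α hα).comap_le

theorem measurableSet_procSigma_eq_one {X : Type*} {δm : ℝ → X → ℝ} {α : ℝ}
    (hα : α ∈ Icc (0:ℝ) 1) : MeasurableSet[procSigma δm] {x | δm α x = 1} :=
  comap_le_procSigma hα _ ⟨{1}, measurableSet_singleton 1, rfl⟩

theorem measureReal_setOf_eq_one_eq_integral {X : Type*} [MeasurableSpace X] {P : Measure X}
    {f : X → ℝ} (hf : Measurable f) (hvals : ∀ x, f x = 0 ∨ f x = 1) :
    P.real {x | f x = 1} = ∫ x, f x ∂P := by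
  have hf_eq : f = {x | f x = 1}.indicator 1 := by
    funext x
    rcases hvals x with h | h <;> simp [h]
  conv_rhs => rw [hf_eq]
  exact (integral_indicator_one (hf (measurableSet_singleton 1))).symm

section StepUp

variable {X ι : Type*} [Fintype ι] {A : ι → ℝ → ℝ} {δ : ι → ℝ → X → ℝ} {q : ℝ}

def threshold (A : ι → ℝ → ℝ) (q : ℝ) (k : ℕ) : ℝ := sublevelSup (fun α => ∑ m, A m α) (q * k)

def stepUpIndex (A : ι → ℝ → ℝ) (δ : ι → ℝ → X → ℝ) (q : ℝ) (x : X) : ℕ :=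
  Nat.findGreatest (fun k => (k : ℝ) ≤ Stot A δ (threshold A q k) x) (Fintype.card ι)

def leaveOneOutIndex [DecidableEq ι] (A : ι → ℝ → ℝ) (δ : ι → ℝ → X → ℝ) (q : ℝ) (m : ι)
    (x : X) : ℕ :=
  Nat.findGreatest
    (fun k => (k : ℝ) ≤ ∑ m' ∈ Finset.univ.erase m, δ m' (A m' (threshold A q k)) x + 1)
    (Fintype.card ι)

def rejectionEvent (A : ι → ℝ → ℝ) (δ : ι → ℝ → X → ℝ) (q : ℝ) (m : ι) (k : ℕ) : Set X :=
  {x | δ m (A m (threshold A q k)) x = 1}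

def leaveOneOutRatio [DecidableEq ι] (A : ι → ℝ → ℝ) (δ : ι → ℝ → X → ℝ) (q : ℝ) (m : ι)
    (x : X) : ℝ :=
  (rejectionEvent A δ q m (leaveOneOutIndex A δ q m x)).indicator 1 x /
    A m (threshold A q (leaveOneOutIndex A δ q m x))

theorem threshold_mem (hA0 : ∀ m, A m 0 = 0) (hAc : ∀ m, ContinuousOn (A m) (Icc 0 1))
    (hq : 0 ≤ q) (k : ℕ) :
    threshold A q k ∈ {α ∈ Icc (0:ℝ) 1 | ∑ m, A m α ≤ q * k} :=
  sublevelSup_mem (continuousOn_finsetSum _ fun m _ => hAc m)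
    (by simp only [hA0, Finset.sum_const_zero]; positivity)

theorem threshold_mono (hA0 : ∀ m, A m 0 = 0) (hAc : ∀ m, ContinuousOn (A m) (Icc 0 1))
    (hq : 0 ≤ q) : Monotone (threshold A q) := fun j k hjk =>
  sublevelSup_mono (continuousOn_finsetSum _ fun m _ => hAc m)
    (by simp only [hA0, Finset.sum_const_zero]; positivity) (by gcongr)

theorem alphaStar_mem_Icc (x : X) : alphaStar A δ q x ∈ Icc (0:ℝ) 1 := by
  have hub : ∀ β ∈ insert (0:ℝ) {α ∈ Icc (0:ℝ) 1 | ∑ m, A m α ≤ q * Stot A δ α x}, β ≤ 1 := by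
    rintro β (rfl | hβ)
    exacts [zero_le_one, hβ.1.2]
  exact ⟨le_csSup ⟨1, hub⟩ (mem_insert _ _), csSup_le (insert_nonempty _ _) hub⟩

theorem Fprop_alphaStar_nonneg {M0 : Finset ι} {x : X}
    (hArange : ∀ m, MapsTo (A m) (Icc 0 1) (Icc 0 1))
    (hvals : ∀ m, ∀ α ∈ Icc (0:ℝ) 1, δ m α x = 0 ∨ δ m α x = 1) :
    0 ≤ Fprop M0 A δ (alphaStar A δ q x) x := by
  have hα : alphaStar A δ q x ∈ Icc (0:ℝ) 1 := alphaStar_mem_Icc x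
  unfold Fprop
  split_ifs with hS
  · refine div_nonneg (Finset.sum_nonneg fun m _ => ?_) hS.le
    rcases hvals m _ (hArange m hα) with h | h <;> simp [h]
  · exact le_rfl

theorem exists_Stot_eq_natCast {x : X} {α : ℝ}
    (hvals : ∀ m, δ m (A m α) x = 0 ∨ δ m (A m α) x = 1) :
    ∃ k ≤ Fintype.card ι, Stot A δ α x = k := by
  classical
  refine ⟨(Finset.univ.filter fun m => δ m (A m α) x = 1).card, Finset.card_filter_le _ _, ?_⟩
  rw [Stot, ← Finset.sum_boole]
  exact Finset.sum_congr rfl fun m _ => by rcases hvals m with h | h <;> simp [h]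

theorem alphaStar_eq_threshold_stepUpIndex {x : X} (hA0 : ∀ m, A m 0 = 0)
    (hAc : ∀ m, ContinuousOn (A m) (Icc 0 1)) (hAmono : ∀ m, MonotoneOn (A m) (Icc 0 1))
    (hArange : ∀ m, MapsTo (A m) (Icc 0 1) (Icc 0 1)) (hq : 0 ≤ q)
    (hvals : ∀ m, ∀ α ∈ Icc (0:ℝ) 1, δ m α x = 0 ∨ δ m α x = 1)
    (hx : ∀ m, MonotoneOn (fun α => δ m α x) (Icc 0 1)) :
    alphaStar A δ q x = threshold A q (stepUpIndex A δ q x) :=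
  sSup_insert_zero_eq_sublevelSup_findGreatest (continuousOn_finsetSum _ fun m _ => hAc m)
    (by simp only [hA0, Finset.sum_const_zero, le_refl]) hq
    (fun _ ha _ hb hab =>
      Finset.sum_le_sum fun m _ => ((hx m).comp (hAmono m) (hArange m)) ha hb hab)
    (fun α hα => exists_Stot_eq_natCast fun m => hvals m _ (hArange m hα))

theorem leaveOneOutIndex_eq_stepUpIndex [DecidableEq ι] {x : X} {m : ι} (hA0 : ∀ m, A m 0 = 0)
    (hAc : ∀ m, ContinuousOn (A m) (Icc 0 1)) (hAmono : ∀ m, MonotoneOn (A m) (Icc 0 1))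
    (hArange : ∀ m, MapsTo (A m) (Icc 0 1) (Icc 0 1)) (hq : 0 ≤ q)
    (hvals : ∀ m, ∀ α ∈ Icc (0:ℝ) 1, δ m α x = 0 ∨ δ m α x = 1)
    (hx : ∀ m, MonotoneOn (fun α => δ m α x) (Icc 0 1))
    (hrej : δ m (A m (threshold A q (stepUpIndex A δ q x))) x = 1) :
    leaveOneOutIndex A δ q m x = stepUpIndex A δ q x := by
  have hc := threshold_mem hA0 hAc hq
  refine findGreatest_le_add_one_eq_of_eq_one (S := fun k => Stot A δ (threshold A q k) x)
    (fun k => (Finset.add_sum_erase _ _ (Finset.mem_univ m)).symm) ?_ (fun k => ?_) hrej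
  · exact fun j k hjk => ((hx m).comp (hAmono m) (hArange m)) (hc j).1 (hc k).1
      (threshold_mono hA0 hAc hq hjk)
  · rcases hvals m _ (hArange m (hc k).1) with h | h <;> simp [h]

theorem leaveOneOutRatio_nonneg [DecidableEq ι] {m : ι} {x : X} (hA0 : ∀ m, A m 0 = 0)
    (hAc : ∀ m, ContinuousOn (A m) (Icc 0 1)) (hArange : ∀ m, MapsTo (A m) (Icc 0 1) (Icc 0 1))
    (hq : 0 ≤ q) : 0 ≤ leaveOneOutRatio A δ q m x :=
  div_nonneg (indicator_nonneg (fun _ _ => zero_le_one) _)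
    (hArange m (threshold_mem hA0 hAc hq _).1).1

theorem Fprop_alphaStar_le [DecidableEq ι] {M0 : Finset ι} {x : X} (hA0 : ∀ m, A m 0 = 0)
    (hAc : ∀ m, ContinuousOn (A m) (Icc 0 1)) (hAmono : ∀ m, MonotoneOn (A m) (Icc 0 1))
    (hArange : ∀ m, MapsTo (A m) (Icc 0 1) (Icc 0 1)) (hq : 0 ≤ q)
    (hA4 : ∀ α ∈ Icc (0:ℝ) 1, ∀ m ∈ M0, (M0.card : ℝ) * A m α ≤ ∑ m', A m' α)
    (hvals : ∀ m, ∀ α ∈ Icc (0:ℝ) 1, δ m α x = 0 ∨ δ m α x = 1)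
    (hx : ∀ m, MonotoneOn (fun α => δ m α x) (Icc 0 1)) (hx0 : ∀ m, δ m 0 x = 0) :
    Fprop M0 A δ (alphaStar A δ q x) x ≤ q / M0.card * ∑ m ∈ M0, leaveOneOutRatio A δ q m x := by
  have hc := threshold_mem hA0 hAc hq
  have hratio_nonneg : ∀ m, 0 ≤ q / M0.card * leaveOneOutRatio A δ q m x := fun m =>
    mul_nonneg (by positivity) (leaveOneOutRatio_nonneg hA0 hAc hArange hq)
  rw [alphaStar_eq_threshold_stepUpIndex hA0 hAc hAmono hArange hq hvals hx, Fprop, Szero,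
    Finset.mul_sum]
  set K := stepUpIndex A δ q x
  split_ifs with hS
  swap
  · exact Finset.sum_nonneg fun m _ => hratio_nonneg m
  rw [Finset.sum_div]
  refine Finset.sum_le_sum fun m hm => ?_
  rcases hvals m _ (hArange m (hc K).1) with h | hrej
  · rw [h, zero_div]
    exact hratio_nonneg m
  rw [leaveOneOutRatio, leaveOneOutIndex_eq_stepUpIndex hA0 hAc hAmono hArange hq hvals hx hrej,
    indicator_of_mem (show x ∈ rejectionEvent A δ q m K from hrej), Pi.one_apply, hrej]
  have hA_pos : 0 < A m (threshold A q K) := (hArange m (hc K).1).1.lt_of_ne fun h => by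
    rw [← h, hx0] at hrej
    exact zero_ne_one hrej
  have hK : (K : ℝ) ≤ Stot A δ (threshold A q K) x := by
    refine Nat.findGreatest_spec (P := fun k => (k : ℝ) ≤ Stot A δ (threshold A q k) x)
      (Nat.zero_le _) ?_
    rw [Nat.cast_zero]
    refine Finset.sum_nonneg fun m _ => ?_
    rcases hvals m _ (hArange m (hc 0).1) with h | h <;> simp [h]
  exact one_div_le_div_mul_one_div hS hA_pos (Nat.one_le_cast.2 (Finset.card_pos.2 ⟨m, hm⟩))
    hq (hA4 _ (hc K).1 m hm) ((hc K).2.trans (mul_le_mul_of_nonneg_left hK hq))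

end StepUp

theorem measurable_leaveOneOutIndex {X ι : Type*} [Fintype ι] [DecidableEq ι] {A : ι → ℝ → ℝ}
    {δ : ι → ℝ → X → ℝ} {q : ℝ} (hA0 : ∀ m, A m 0 = 0)
    (hAc : ∀ m, ContinuousOn (A m) (Icc 0 1)) (hArange : ∀ m, MapsTo (A m) (Icc 0 1) (Icc 0 1))
    (hq : 0 ≤ q) (m : ι) :
    Measurable[⨆ m' ∈ Finset.univ.erase m, procSigma (δ m')] (leaveOneOutIndex A δ q m) := by
  refine @measurable_findGreatest _ (⨆ m' ∈ Finset.univ.erase m, procSigma (δ m')) _ _ _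
    fun k _ => measurableSet_le measurable_const
      ((Finset.measurable_sum _ fun m' hm' => ?_).add_const 1)
  refine Measurable.of_comap_le ((comap_le_procSigma ?_).trans
    (le_iSup₂ (f := fun m' (_ : m' ∈ Finset.univ.erase m) => procSigma (δ m')) m' hm'))
  exact hArange m' (threshold_mem hA0 hAc hq k).1

theorem indep_procSigma_iSup_erase {X ι : Type*} [mX : MeasurableSpace X] [Fintype ι]
    [DecidableEq ι] {P : Measure X} [IsProbabilityMeasure P] {M0 M1 : Finset ι}
    (hpart : M0 ∪ M1 = Finset.univ) (hdisj : Disjoint M0 M1) {δ : ι → ℝ → X → ℝ}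
    (hmeas : ∀ m, ∀ α ∈ Icc (0:ℝ) 1, Measurable (δ m α))
    (hD3a : Indep (⨆ m ∈ M0, procSigma (δ m)) (⨆ m ∈ M1, procSigma (δ m)) P)
    (hD3b : iIndep (fun m : {m // m ∈ M0} => procSigma (δ (m : ι))) P) {m : ι} (hm : m ∈ M0) :
    Indep (procSigma (δ m)) (⨆ m' ∈ Finset.univ.erase m, procSigma (δ m')) P := by
  have hle : ∀ s : Finset ι, ⨆ m' ∈ s, procSigma (δ m') ≤ mX :=
    fun s => iSup₂_le fun m' _ => procSigma_le (hmeas m')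
  have h₁₂ : Indep (procSigma (δ m)) (⨆ m' ∈ M0.erase m, procSigma (δ m')) P := by
    have h := indep_iSup_of_disjoint (fun m' : {m // m ∈ M0} => procSigma_le (hmeas m')) hD3b
      (disjoint_compl_right (a := ({⟨m, hm⟩} : Set {m // m ∈ M0})))
    have hrest : ⨆ i ∈ ({⟨m, hm⟩}ᶜ : Set {m // m ∈ M0}), procSigma (δ i) =
        ⨆ m' ∈ M0.erase m, procSigma (δ m') := by
      simp only [iSup_subtype, mem_compl_iff, mem_singleton_iff, Subtype.mk.injEq,
        Finset.mem_erase, ne_eq, iSup_and]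
      exact iSup_congr fun i => iSup_comm
    rwa [hrest, iSup_singleton] at h
  have h₁₂₃ : Indep (procSigma (δ m) ⊔ ⨆ m' ∈ M0.erase m, procSigma (δ m'))
      (⨆ m' ∈ M1, procSigma (δ m')) P := by
    rwa [← Finset.insert_erase hm, Finset.iSup_insert] at hD3a
  have hsplit : Finset.univ.erase m = M0.erase m ∪ M1 := by
    rw [← hpart, Finset.erase_union_distrib,
      Finset.erase_eq_of_notMem (Finset.disjoint_left.1 hdisj hm)]
  rw [hsplit, Finset.iSup_union]
  exact h₁₂.indep_sup_of_indep_sup (procSigma_le (hmeas m)) (hle _) (hle _) h₁₂₃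

theorem integral_leaveOneOutRatio_le_one {X ι : Type*} [MeasurableSpace X] [Fintype ι]
    [DecidableEq ι] {P : Measure X} [IsProbabilityMeasure P] {M0 M1 : Finset ι}
    (hpart : M0 ∪ M1 = Finset.univ) (hdisj : Disjoint M0 M1) {δ : ι → ℝ → X → ℝ}
    {A : ι → ℝ → ℝ} {q : ℝ} (hmeas : ∀ m, ∀ α ∈ Icc (0:ℝ) 1, Measurable (δ m α))
    (hvals : ∀ m, ∀ α ∈ Icc (0:ℝ) 1, ∀ x, δ m α x = 0 ∨ δ m α x = 1)
    (hD3a : Indep (⨆ m ∈ M0, procSigma (δ m)) (⨆ m ∈ M1, procSigma (δ m)) P)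
    (hD3b : iIndep (fun m : {m // m ∈ M0} => procSigma (δ (m : ι))) P)
    (hD4 : ∀ m ∈ M0, ∀ α ∈ Icc (0:ℝ) 1, ∫ x, δ m α x ∂P = α) (hA0 : ∀ m, A m 0 = 0)
    (hAc : ∀ m, ContinuousOn (A m) (Icc 0 1)) (hArange : ∀ m, MapsTo (A m) (Icc 0 1) (Icc 0 1))
    (hq : 0 ≤ q) {m : ι} (hm : m ∈ M0) :
    Integrable (leaveOneOutRatio A δ q m) P ∧ ∫ x, leaveOneOutRatio A δ q m x ∂P ≤ 1 := by
  have hc : ∀ k, A m (threshold A q k) ∈ Icc (0:ℝ) 1 := fun k =>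
    hArange m (threshold_mem hA0 hAc hq k).1
  exact integral_indicator_div_le_one (procSigma_le (hmeas m))
    (iSup₂_le fun m' _ => procSigma_le (hmeas m'))
    (indep_procSigma_iSup_erase hpart hdisj hmeas hD3a hD3b hm)
    (fun k => measurableSet_procSigma_eq_one (hc k))
    (measurable_leaveOneOutIndex hA0 hAc hArange hq m) (fun x => Nat.findGreatest_le _)
    (fun k => (measureReal_setOf_eq_one_eq_integral (hmeas m _ (hc k)) (hvals m _ (hc k))).trans
      (hD4 m hm _ (hc k)))

theorem fdr_control_general
    {X ι : Type*} [MeasurableSpace X] [Fintype ι] [DecidableEq ι]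
    (P : Measure X) [IsProbabilityMeasure P]
    -- the partition 𝓜 = 𝓜₀(P) ∪ 𝓜₁(P)
    (M0 M1 : Finset ι) (hpart : M0 ∪ M1 = Finset.univ) (hdisj : Disjoint M0 M1)
    -- the multiple decision process Δ and the size function A
    (δ : ι → ℝ → X → ℝ) (A : ι → ℝ → ℝ)
    (hmeas : ∀ m, ∀ α ∈ Set.Icc (0:ℝ) 1, Measurable (δ m α))
    (hvals : ∀ m, ∀ α ∈ Set.Icc (0:ℝ) 1, ∀ x, δ m α x = 0 ∨ δ m α x = 1)
    -- (D1)
    (hD1 : ∀ m, ∀ᵐ x ∂P, δ m 0 x = 0 ∧ δ m 1 x = 1)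
    -- (D2): nondecreasing right-continuous {0,1}-valued paths
    (hD2 : ∀ᵐ x ∂P, ∀ m, MonotoneOn (fun α => δ m α x) (Set.Icc 0 1) ∧
      ∀ α ∈ Set.Ico (0:ℝ) 1, ContinuousWithinAt (fun β => δ m β x) (Set.Ici α) α)
    -- (D3)
    (hD3a : Indep (⨆ m ∈ M0, procSigma (δ m)) (⨆ m ∈ M1, procSigma (δ m)) P)
    (hD3b : iIndep (fun m : {m // m ∈ M0} => procSigma (δ (m : ι))) P)
    -- (D4): each null decision function has exact size α
    (hD4 : ∀ m ∈ M0, ∀ α ∈ Set.Icc (0:ℝ) 1, ∫ x, δ m α x ∂P = α)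
    -- (A1)–(A4)
    (hArange : ∀ m, ∀ α ∈ Set.Icc (0:ℝ) 1, A m α ∈ Set.Icc (0:ℝ) 1)
    (hA1 : ∀ m, A m 0 = 0 ∧ A m 1 = 1)
    (hA2 : ∀ m, ContinuousOn (A m) (Set.Icc 0 1) ∧ StrictMonoOn (A m) (Set.Icc 0 1))
    (hA4 : ∀ α ∈ Set.Icc (0:ℝ) 1, ∀ m ∈ M0, (M0.card : ℝ) * A m α ≤ ∑ m', A m' α)
    (q : ℝ) (hq : q ∈ Set.Icc (0:ℝ) 1) :
    ∫ x, Fprop M0 A δ (alphaStar A δ q x) x ∂P ≤ q := by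
  have hA0 : ∀ m, A m 0 = 0 := fun m => (hA1 m).1
  have hAc : ∀ m, ContinuousOn (A m) (Icc 0 1) := fun m => (hA2 m).1
  have hAmono : ∀ m, MonotoneOn (A m) (Icc 0 1) := fun m => (hA2 m).2.monotoneOn
  have hg : ∀ m ∈ M0, Integrable (leaveOneOutRatio A δ q m) P ∧
      ∫ x, leaveOneOutRatio A δ q m x ∂P ≤ 1 := fun m hm =>
    integral_leaveOneOutRatio_le_one hpart hdisj hmeas hvals hD3a hD3b hD4 hA0 hAc hArange hq.1 hm
  have hF_le : ∀ᵐ x ∂P, Fprop M0 A δ (alphaStar A δ q x) x ≤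
      q / M0.card * ∑ m ∈ M0, leaveOneOutRatio A δ q m x := by
    filter_upwards [hD2, ae_all_iff.2 hD1] with x hx hx0
    exact Fprop_alphaStar_le hA0 hAc hAmono hArange hq.1 hA4 (fun m α hα => hvals m α hα x)
      (fun m => (hx m).1) (fun m => (hx0 m).1)
  calc ∫ x, Fprop M0 A δ (alphaStar A δ q x) x ∂P
      ≤ ∫ x, q / M0.card * ∑ m ∈ M0, leaveOneOutRatio A δ q m x ∂P :=
        integral_mono_of_nonneg
          (ae_of_all _ fun x => Fprop_alphaStar_nonneg hArange fun m α hα => hvals m α hα x)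
          ((integrable_finsetSum _ fun m hm => (hg m hm).1).const_mul _) hF_le
    _ = q / M0.card * ∑ m ∈ M0, ∫ x, leaveOneOutRatio A δ q m x ∂P := by
        rw [integral_const_mul, integral_finsetSum _ fun m hm => (hg m hm).1]
    _ ≤ q / M0.card * M0.card := by
        refine mul_le_mul_of_nonneg_left ?_ (by have := hq.1; positivity)
        simpa using Finset.sum_le_card_nsmul M0 _ 1 fun m hm => (hg m hm).2
    _ ≤ q := by
        rcases eq_or_ne (M0.card : ℝ) 0 with h | h
        · simpa [h] using hq.1
        · rw [div_mul_cancel₀ _ h]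

/-- **Theorem 2 (FDR control).** -/
theorem fdr_control
    {X ι : Type*} [MeasurableSpace X] [Fintype ι] [DecidableEq ι] [Nonempty ι]
    (P : Measure X) [IsProbabilityMeasure P]
    -- the partition 𝓜 = 𝓜₀(P) ∪ 𝓜₁(P)
    (M0 M1 : Finset ι) (hpart : M0 ∪ M1 = Finset.univ) (hdisj : Disjoint M0 M1)
    -- the multiple decision process Δ and the size function A
    (δ : ι → ℝ → X → ℝ) (A : ι → ℝ → ℝ)
    (hmeas : ∀ m, ∀ α ∈ Set.Icc (0:ℝ) 1, Measurable (δ m α))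
    (hvals : ∀ m, ∀ α ∈ Set.Icc (0:ℝ) 1, ∀ x, δ m α x = 0 ∨ δ m α x = 1)
    -- (D1)
    (hD1 : ∀ m, ∀ᵐ x ∂P, δ m 0 x = 0 ∧ δ m 1 x = 1)
    -- (D2): nondecreasing right-continuous {0,1}-valued paths
    (hD2 : ∀ᵐ x ∂P, ∀ m, MonotoneOn (fun α => δ m α x) (Set.Icc 0 1) ∧
      ∀ α ∈ Set.Ico (0:ℝ) 1, ContinuousWithinAt (fun β => δ m β x) (Set.Ici α) α)
    -- (D3)
    (hD3a : Indep (⨆ m ∈ M0, procSigma (δ m)) (⨆ m ∈ M1, procSigma (δ m)) P)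
    (hD3b : iIndep (fun m : {m // m ∈ M0} => procSigma (δ (m : ι))) P)
    -- (D4): each null decision function has exact size α
    (hD4 : ∀ m ∈ M0, ∀ α ∈ Set.Icc (0:ℝ) 1, ∫ x, δ m α x ∂P = α)
    -- (A1)–(A4)
    (hArange : ∀ m, ∀ α ∈ Set.Icc (0:ℝ) 1, A m α ∈ Set.Icc (0:ℝ) 1)
    (hA1 : ∀ m, A m 0 = 0 ∧ A m 1 = 1)
    (hA2 : ∀ m, ContinuousOn (A m) (Set.Icc 0 1) ∧ StrictMonoOn (A m) (Set.Icc 0 1))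
    (hA3 : ∀ α ∈ Set.Icc (0:ℝ) 1, 1 - α ≤ ∏ m, (1 - A m α))
    (hA4 : ∀ α ∈ Set.Icc (0:ℝ) 1, ∀ m ∈ M0, (M0.card : ℝ) * A m α ≤ ∑ m', A m' α)
    (q : ℝ) (hq : q ∈ Set.Icc (0:ℝ) 1) :
    ∫ x, Fprop M0 A δ (alphaStar A δ q x) x ∂P ≤ q :=
  fdr_control_general P M0 M1 hpart hdisj δ A hmeas hvals hD1 hD2 hD3a hD3b hD4 hArange hA1 hA2 hA4
    q hq

end
end

section
/- Šidák p-value representations of the cutoff indices: suppose the generalized p-values α_1, …, α_M ∈ [0,1] are distinct, let α_(1) < ⋯ < α_(M) be their ordered values, and for the Šidák size function A^S_m(α) = 1 − (1 − α)^{1/M} define the ordinary p-values P_m = 1 − (1 − α_m)^{1/M}, with ordered values P_(1) < ⋯ < P_(M). Then for every q ∈ [0,1]: (i) max{k ∈ {1,…,M} : ∏_{m=j}^{M} (1 − A^S_m(α_(j))) ≥ 1 − q for all j = 1,…,k} = max{k ∈ {1,…,M} : P_(j) ≤ 1 − (1 − q)^{1/(M−j+1)} for all j = 1,…,k}, i.e.,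 J†(q) equals the step-down sequential Šidák index; and (ii) max{k ∈ {1,…,M} : Σ_{m∈𝓜} A^S_m(α_(k)) ≤ qk} = max{k ∈ {1,…,M} : P_(k) ≤ qk/M}, i.e., J*(q) equals the step-up Benjamini–Hochberg index. -/
/-!
Statement 5: Šidák p-value representations of the cutoff indices.
With the Šidák size function `A^S_m(α) = 1 - (1-α)^{1/M}` and distinct ordered
generalized p-values `α_(1) < ⋯ < α_(M)` with ordinary p-values
`P_(j) = 1 - (1-α_(j))^{1/M}`:
(i) `J†(q)` equals the step-down sequential Šidák index, and
(ii) `J*(q)` equals the step-up Benjamini–Hochberg index.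
Maxima over empty sets are taken to be 0 (`sSup ∅ = 0` in `ℕ`).
-/

noncomputable section

/-- The common component of the Šidák size function for `M` tests. -/
def sidakAN (M : ℕ) (α : ℝ) : ℝ := 1 - (1 - α) ^ ((M : ℝ)⁻¹)

/-- **Šidák p-value representations of `J†(q)` and `J*(q)`.** -/
theorem sidak_pvalue_representation
    (M : ℕ) (hM : 1 ≤ M) (q : ℝ) (hq : q ∈ Set.Icc (0:ℝ) 1)
    -- the ordered generalized p-values α_(1) < ⋯ < α_(M), indexed by j ∈ {1,…,M}
    (αo : ℕ → ℝ) (hrange : ∀ j ∈ Finset.Icc 1 M, αo j ∈ Set.Icc (0:ℝ) 1)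
    (hmono : StrictMonoOn αo (Set.Icc 1 M))
    -- the ordered ordinary p-values P_(j) = A^S(α_(j))
    (Po : ℕ → ℝ) (hPo : ∀ j ∈ Finset.Icc 1 M, Po j = sidakAN M (αo j)) :
    -- (i) J†(q) is the step-down sequential Šidák index
    (sSup {k | k ∈ Finset.Icc 1 M ∧ ∀ j ∈ Finset.Icc 1 k,
        1 - q ≤ ∏ _m ∈ Finset.Icc j M, (1 - sidakAN M (αo j))}
      = sSup {k | k ∈ Finset.Icc 1 M ∧ ∀ j ∈ Finset.Icc 1 k,
        Po j ≤ 1 - (1 - q) ^ (((M : ℝ) - (j : ℝ) + 1)⁻¹)}) ∧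
    -- (ii) J*(q) is the step-up Benjamini–Hochberg index
    (sSup {k | k ∈ Finset.Icc 1 M ∧
        ∑ _m ∈ Finset.Icc 1 M, sidakAN M (αo k) ≤ q * k}
      = sSup {k | k ∈ Finset.Icc 1 M ∧ Po k ≤ q * k / M}) := by
  obtain ⟨hq0, hq1⟩ := hq
  have hM0 : (0:ℝ) < M := by exact_mod_cast hM
  constructor
  · congr 1
    ext k
    simp only [Set.mem_setOf_eq]
    refine and_congr_right fun hk => ?_
    refine forall₂_congr fun j hj => ?_
    obtain ⟨hk1, hkM⟩ := Finset.mem_Icc.mp hk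
    obtain ⟨hj1, hjk⟩ := Finset.mem_Icc.mp hj
    have hj' : j ∈ Finset.Icc 1 M := Finset.mem_Icc.mpr ⟨hj1, hjk.trans hkM⟩
    have hjM : j ≤ M := hjk.trans hkM
    have hα := hrange j hj'
    set a := (1 - αo j) ^ ((M:ℝ)⁻¹) with ha
    have ha0 : 0 ≤ a := Real.rpow_nonneg (by linarith [hα.2]) _
    have hPoj : Po j = 1 - a := by rw [hPo j hj']; simp [sidakAN, ha]
    set n := M + 1 - j with hn
    have hn0 : n ≠ 0 := by omega
    have hcard : (Finset.Icc j M).card = n := by rw [Nat.card_Icc]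
    have hprod : ∏ _m ∈ Finset.Icc j M, (1 - sidakAN M (αo j)) = a ^ n := by
      rw [Finset.prod_const, hcard]
      congr 1
      simp [sidakAN, ha]
    have hcast : (M:ℝ) - (j:ℝ) + 1 = (n:ℝ) := by
      rw [hn, Nat.cast_sub (by omega)]
      push_cast
      ring
    rw [hprod, hPoj, hcast]
    constructor
    · intro h
      have h1 : (1 - q) ^ ((n:ℝ)⁻¹) ≤ a := by
        calc (1-q)^((n:ℝ)⁻¹) ≤ (a^n)^((n:ℝ)⁻¹) :=
              Real.rpow_le_rpow (by linarith) h (by positivity)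
          _ = a := Real.pow_rpow_inv_natCast ha0 hn0
      linarith
    · intro h
      have h1 : (1 - q) ^ ((n:ℝ)⁻¹) ≤ a := by linarith
      calc 1 - q = ((1-q)^((n:ℝ)⁻¹))^n :=
            (Real.rpow_inv_natCast_pow (by linarith) hn0).symm
        _ ≤ a ^ n := pow_le_pow_left₀ (Real.rpow_nonneg (by linarith) _) h1 n
  · congr 1
    ext k
    simp only [Set.mem_setOf_eq]
    refine and_congr_right fun hk => ?_
    rw [hPo k hk, Finset.sum_const, Nat.card_Icc,
      show M + 1 - 1 = M from by omega, nsmul_eq_mul,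
      le_div_iff₀ hM0, mul_comm]


end
end

section
/- Set equality (eq1): under (D1)–(D2) and (A1)–(A2), for every q ∈ [0,1], almost surely the event that no null hypothesis is rejected at level α†(q) coincides with the event that α†(q) is below all null generalized p-values: ⋂_{m∈𝓜₀} {δ_m(A_m(α†(q))) = 0} = {α†(q) < min_{m∈𝓜₀} α_m}. -/
/-!
Statement 9 (set equality eq1): under (D1)–(D2) and (A1)–(A2), for every q ∈ [0,1],
almost surely ⋂_{m∈𝓜₀} {δ_m(A_m(α†(q))) = 0} = {α†(q) < min_{m∈𝓜₀} α_m}.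
-/

open MeasureTheory Function Set

noncomputable section

/-- The generalized p-value statistic `α_m = inf {α ∈ [0,1] : δ_m(A_m(α)) = 1}`. -/
def genP {X ι : Type*} (A : ι → ℝ → ℝ) (δ : ι → ℝ → X → ℝ) (m : ι) (x : X) : ℝ :=
  sInf {α ∈ Set.Icc (0:ℝ) 1 | δ m (A m α) x = 1}

private lemma key_lemma (f g : ℝ → ℝ) (t : ℝ) (ht : t ∈ Set.Icc (0:ℝ) 1)
    (hg_range : ∀ α ∈ Set.Icc (0:ℝ) 1, g α ∈ Set.Icc (0:ℝ) 1)
    (hg1 : g 1 = 1)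
    (hgc : ContinuousOn g (Set.Icc 0 1))
    (hgm : StrictMonoOn g (Set.Icc 0 1))
    (hfm : MonotoneOn f (Set.Icc 0 1))
    (hfr : ∀ β ∈ Set.Ico (0:ℝ) 1, ContinuousWithinAt f (Set.Ici β) β)
    (hfv : ∀ β ∈ Set.Icc (0:ℝ) 1, f β = 0 ∨ f β = 1)
    (hf1 : f 1 = 1) :
    (f (g t) = 0 ↔ t < sInf {α ∈ Set.Icc (0:ℝ) 1 | f (g α) = 1}) := by
  set S : Set ℝ := {α ∈ Set.Icc (0:ℝ) 1 | f (g α) = 1} with hS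
  have h1S : (1:ℝ) ∈ S := by
    refine ⟨Set.right_mem_Icc.2 zero_le_one, ?_⟩
    rw [hg1]; exact hf1
  have hSne : S.Nonempty := ⟨1, h1S⟩
  have hSbdd : BddBelow S := ⟨0, fun α hα => hα.1.1⟩
  constructor
  · intro hft
    -- t < 1
    have ht1 : t < 1 := by
      rcases lt_or_eq_of_le ht.2 with h | h
      · exact h
      · exfalso; rw [h, hg1, hf1] at hft; norm_num at hft
    set b := g t with hb
    have hbmem : b ∈ Set.Icc (0:ℝ) 1 := hg_range t ht
    have hb1 : b < 1 := by
      have := hgm ht (Set.right_mem_Icc.2 zero_le_one) ht1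
      rwa [hg1] at this
    -- right continuity of f at b gives η
    have hfc : ContinuousWithinAt f (Set.Ici b) b := hfr b ⟨hbmem.1, hb1⟩
    have hev : ∀ᶠ β in nhdsWithin b (Set.Ici b), f β < 1/2 := by
      have : Filter.Tendsto f (nhdsWithin b (Set.Ici b)) (nhds (f b)) := hfc
      rw [hft] at this
      exact this.eventually_lt_const (by norm_num)
    obtain ⟨η, hη, hηspec'⟩ := Metric.mem_nhdsWithin_iff.1 hev
    have hηspec : ∀ β ∈ Set.Ici b, dist β b < η → f β < 1/2 := by
      intro β hβ hd
      exact hηspec' ⟨Metric.mem_ball.2 hd, hβ⟩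
    -- continuity of g at t gives ε
    have hgct : Filter.Tendsto g (nhdsWithin t (Set.Icc 0 1)) (nhds b) := hgc t ht
    have hev2 : ∀ᶠ α in nhdsWithin t (Set.Icc 0 1), g α < b + η :=
      hgct.eventually_lt_const (by linarith)
    obtain ⟨ε, hε, hεspec'⟩ := Metric.mem_nhdsWithin_iff.1 hev2
    have hεspec : ∀ α ∈ Set.Icc (0:ℝ) 1, dist α t < ε → g α < b + η := by
      intro α hα hd
      exact hεspec' ⟨Metric.mem_ball.2 hd, hα⟩
    refine lt_of_lt_of_le (b := min (t + ε) 1) ?_ (le_csInf hSne ?_)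
    · exact lt_min (by linarith) ht1
    · intro α hα
      by_contra hcon
      push_neg at hcon
      have hα01 : α ∈ Set.Icc (0:ℝ) 1 := hα.1
      have hαlt : α < t + ε := lt_of_lt_of_le hcon (min_le_left _ _)
      rcases le_or_gt α t with hle | hlt
      · -- α ≤ t : f (g α) ≤ f b = 0
        have hga : g α ≤ b := by
          rcases lt_or_eq_of_le hle with h | h
          · exact (hgm hα01 ht h).le
          · rw [h]
        have := hfm (hg_range α hα01) hbmem hga
        rw [hft] at this
        have := hα.2
        linarith
      · -- t < α < t + ε
        have hdist : dist α t < ε := by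
          rw [Real.dist_eq, abs_of_pos (by linarith)]; linarith
        have hga : g α < b + η := hεspec α hα01 hdist
        have hgab : b < g α := hgm ht hα01 hlt
        have : f (g α) < 1/2 := by
          apply hηspec (g α) (Set.mem_Ici.2 hgab.le)
          rw [Real.dist_eq, abs_of_pos (by linarith)]; linarith
        rw [hα.2] at this; linarith
  · intro hlt
    have htnS : t ∉ S := fun h => absurd (csInf_le hSbdd h) (not_le.2 hlt)
    rcases hfv (g t) (hg_range t ht) with h | h
    · exact h
    · exact absurd ⟨ht, h⟩ htnS

/-- **Set equality (eq1).** -/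
theorem no_null_rejection_iff_below_min_null_pvalue
    {X ι : Type*} [MeasurableSpace X] [Fintype ι] [DecidableEq ι] [Nonempty ι]
    (P : Measure X) [IsProbabilityMeasure P]
    (M0 M1 : Finset ι) (hpart : M0 ∪ M1 = Finset.univ) (hdisj : Disjoint M0 M1)
    (hM0 : M0.Nonempty)
    (δ : ι → ℝ → X → ℝ) (A : ι → ℝ → ℝ)
    (hmeas : ∀ m, ∀ α ∈ Set.Icc (0:ℝ) 1, Measurable (δ m α))
    (hvals : ∀ m, ∀ α ∈ Set.Icc (0:ℝ) 1, ∀ x, δ m α x = 0 ∨ δ m α x = 1)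
    -- (D1)
    (hD1 : ∀ m, ∀ᵐ x ∂P, δ m 0 x = 0 ∧ δ m 1 x = 1)
    -- (D2)
    (hD2 : ∀ᵐ x ∂P, ∀ m, MonotoneOn (fun α => δ m α x) (Set.Icc 0 1) ∧
      ∀ α ∈ Set.Ico (0:ℝ) 1, ContinuousWithinAt (fun β => δ m β x) (Set.Ici α) α)
    -- (A1)–(A2)
    (hArange : ∀ m, ∀ α ∈ Set.Icc (0:ℝ) 1, A m α ∈ Set.Icc (0:ℝ) 1)
    (hA1 : ∀ m, A m 0 = 0 ∧ A m 1 = 1)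
    (hA2 : ∀ m, ContinuousOn (A m) (Set.Icc 0 1) ∧ StrictMonoOn (A m) (Set.Icc 0 1))
    (q : ℝ) (hq : q ∈ Set.Icc (0:ℝ) 1) :
    ∀ᵐ x ∂P,
      ((∀ m ∈ M0, δ m (A m (alphaDag A δ q x)) x = 0) ↔
        alphaDag A δ q x < M0.inf' hM0 (fun m => genP A δ m x)) := by
  filter_upwards [(MeasureTheory.ae_all_iff (μ := P)).2 hD1, hD2] with x hx1 hx2
  set t := alphaDag A δ q x with htdef
  have hbdd : ∀ b ∈ ({α ∈ Set.Icc (0:ℝ) 1 | Hone A δ α x < 1 - q} ∪ {1}), (0:ℝ) ≤ b := by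
    rintro b (hb | hb)
    · exact hb.1.1
    · rw [Set.mem_singleton_iff] at hb; rw [hb]; exact zero_le_one
  have ht : t ∈ Set.Icc (0:ℝ) 1 := by
    constructor
    · exact le_csInf ⟨1, Or.inr rfl⟩ hbdd
    · exact csInf_le ⟨0, hbdd⟩ (Or.inr rfl)
  have key : ∀ m, (δ m (A m t) x = 0 ↔ t < genP A δ m x) := by
    intro m
    exact key_lemma (fun β => δ m β x) (A m) t ht (hArange m) (hA1 m).2
      (hA2 m).1 (hA2 m).2 (hx2 m).1 (hx2 m).2
      (fun β hβ => hvals m β hβ x) (hx1 m).2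
  rw [Finset.lt_inf'_iff]
  exact forall₂_congr fun m _ => key m

end
end

section
/- Set equality (eq2): under (D1)–(D2) and (A1)–(A3), for every q ∈ [0,1], almost surely {α†(q) < min_{m∈𝓜₀} α_m} = {α#(q) < min_{m∈𝓜₀} α_m}; that is, the first crossing time of H₁ is below the minimum null generalized p-value if and only if the first crossing time of H₂ is. -/
/-!
Below `c = min_{m ∈ 𝓜₀} α_m` every null decision is still `0`, and so is its left limit at
`A_m(α)` (for `α > 0`, `δ_m` vanishes on `(0, A_m(α)]`; for `α = 0` the factor is `1^… = 1`).
Hence the `𝓜₀`-factors of `H₁` and `H₂` coincide on `[0, c)`, the two sublevel sets agree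
there, and an infimum of `S ∪ {1}` lies below `c ≤ 1` exactly when `S` meets `(-∞, c)`.
-/

open MeasureTheory Function Set

noncomputable section

/-- The process `H₂(α) = (∏_{m∈𝓜₀} (1 - A_m(α))) ∏_{m∈𝓜₁} (1 - A_m(α))^{1 - δ_m(A_m(α)-)}`. -/
def Htwo {X ι : Type*} (M0 M1 : Finset ι) (A : ι → ℝ → ℝ)
    (δ : ι → ℝ → X → ℝ) (α : ℝ) (x : X) : ℝ :=
  (∏ m ∈ M0, (1 - A m α)) *
    ∏ m ∈ M1, (1 - A m α) ^ (1 - Function.leftLim (fun β => δ m β x) (A m α))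

/-- The first crossing time `α#(q) = inf {α ∈ [0,1] : H₂(α) < 1 - q}` (with `inf ∅ = 1`). -/
def alphaPound {X ι : Type*} (M0 M1 : Finset ι) (A : ι → ℝ → ℝ)
    (δ : ι → ℝ → X → ℝ) (q : ℝ) (x : X) : ℝ :=
  sInf ({α ∈ Set.Icc (0:ℝ) 1 | Htwo M0 M1 A δ α x < 1 - q} ∪ {1})

lemma sInf_union_one_lt_iff {s : Set ℝ} {c : ℝ} (hs : BddBelow s) (hc : c ≤ 1) :
    sInf (s ∪ {1}) < c ↔ ∃ a ∈ s, a < c := by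
  rw [csInf_lt_iff (hs.union bddBelow_singleton) ⟨1, Or.inr rfl⟩]
  constructor
  · rintro ⟨a, ha | rfl, hac⟩
    · exact ⟨a, ha, hac⟩
    · exact absurd hc (not_le.2 hac)
  · rintro ⟨a, ha, hac⟩
    exact ⟨a, Or.inl ha, hac⟩

lemma sInf_sublevel_union_one_lt_iff_of_eqOn {f g : ℝ → ℝ} {r c : ℝ} (hc : c ≤ 1)
    (hfg : ∀ α ∈ Icc (0 : ℝ) 1, α < c → f α = g α) :
    sInf ({α ∈ Icc (0 : ℝ) 1 | f α < r} ∪ {1}) < c ↔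
      sInf ({α ∈ Icc (0 : ℝ) 1 | g α < r} ∪ {1}) < c := by
  have hbdd : ∀ h : ℝ → ℝ, BddBelow {α ∈ Icc (0 : ℝ) 1 | h α < r} :=
    fun _ => ⟨0, fun _ ha => ha.1.1⟩
  rw [sInf_union_one_lt_iff (hbdd f) hc, sInf_union_one_lt_iff (hbdd g) hc]
  refine exists_congr fun α => ⟨?_, ?_⟩
  · rintro ⟨⟨hα, hfα⟩, hαc⟩
    exact ⟨⟨hα, hfg α hα hαc ▸ hfα⟩, hαc⟩
  · rintro ⟨⟨hα, hgα⟩, hαc⟩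
    exact ⟨⟨hα, (hfg α hα hαc).symm ▸ hgα⟩, hαc⟩

lemma sInf_le_one_of_subset_Icc {s : Set ℝ} (hs : s ⊆ Icc 0 1) : sInf s ≤ 1 := by
  rcases s.eq_empty_or_nonempty with rfl | ⟨a, ha⟩
  · simp
  · exact (csInf_le ⟨0, fun b hb => (hs hb).1⟩ ha).trans (hs ha).2

lemma leftLim_eq_of_eqOn_Ioo {f : ℝ → ℝ} {a b c : ℝ} (hab : a < b)
    (hf : EqOn f (fun _ => c) (Ioo a b)) : leftLim f b = c :=
  leftLim_eq_of_tendsto <| tendsto_const_nhds.congr' <|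
    Filter.eventuallyEq_of_mem (Ioo_mem_nhdsLT hab) fun _ h => (hf h).symm

lemma leftLim_eq_zero_of_monotoneOn {f : ℝ → ℝ} {b : ℝ} (hmono : MonotoneOn f (Icc 0 1))
    (hvals : ∀ β ∈ Icc (0 : ℝ) 1, f β = 0 ∨ f β = 1) (hb : b ∈ Ioc (0 : ℝ) 1) (hfb : f b = 0) :
    leftLim f b = 0 := by
  refine leftLim_eq_of_eqOn_Ioo hb.1 fun β hβ => ?_
  have hβ01 : β ∈ Icc (0 : ℝ) 1 := ⟨hβ.1.le, hβ.2.le.trans hb.2⟩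
  have hle : f β ≤ 0 := hfb ▸ hmono hβ01 (Ioc_subset_Icc_self hb) hβ.2.le
  rcases hvals β hβ01 with h | h
  · exact h
  · linarith

section Processes

variable {X ι : Type*} {A : ι → ℝ → ℝ} {δ : ι → ℝ → X → ℝ}

-- Unconditional: if no level rejects `m`, the infimum of the empty set is `0` in `ℝ`.
lemma genP_le_one (m : ι) (x : X) : genP A δ m x ≤ 1 :=
  sInf_le_one_of_subset_Icc fun _ h => h.1

lemma decision_eq_zero_of_lt_genP {m : ι} {x : X} {α : ℝ}
    (hvals : ∀ β ∈ Icc (0 : ℝ) 1, δ m β x = 0 ∨ δ m β x = 1)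
    (hA : A m α ∈ Icc (0 : ℝ) 1) (hα : α ∈ Icc (0 : ℝ) 1) (hlt : α < genP A δ m x) :
    δ m (A m α) x = 0 :=
  (hvals _ hA).resolve_right fun h => notMem_of_lt_csInf hlt ⟨0, fun _ hb => hb.1.1⟩ ⟨hα, h⟩

lemma eq_zero_or_leftLim_eq_zero_of_lt_genP {m : ι} {x : X} {α : ℝ}
    (hmono : MonotoneOn (fun β => δ m β x) (Icc 0 1))
    (hvals : ∀ β ∈ Icc (0 : ℝ) 1, δ m β x = 0 ∨ δ m β x = 1)
    (hA : A m α ∈ Icc (0 : ℝ) 1) (hA0 : A m 0 = 0)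
    (hAmono : StrictMonoOn (A m) (Icc 0 1)) (hα : α ∈ Icc (0 : ℝ) 1)
    (hlt : α < genP A δ m x) :
    A m α = 0 ∨ leftLim (fun β => δ m β x) (A m α) = 0 := by
  rcases hα.1.eq_or_lt with rfl | hpos
  · exact Or.inl hA0
  · have hApos : 0 < A m α := hA0 ▸ hAmono (left_mem_Icc.2 zero_le_one) hα hpos
    exact Or.inr <| leftLim_eq_zero_of_monotoneOn hmono hvals ⟨hApos, hA.2⟩
      (decision_eq_zero_of_lt_genP hvals hA hα hlt)

lemma Hone_eq_Htwo [Fintype ι] [DecidableEq ι] {M0 M1 : Finset ι} {α : ℝ} {x : X}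
    (hpart : M0 ∪ M1 = Finset.univ) (hdisj : Disjoint M0 M1)
    (h : ∀ m ∈ M0, A m α = 0 ∨ leftLim (fun β => δ m β x) (A m α) = 0) :
    Hone A δ α x = Htwo M0 M1 A δ α x := by
  rw [Hone, Htwo, ← hpart, Finset.prod_union hdisj]
  congr 1
  refine Finset.prod_congr rfl fun m hm => ?_
  rcases h m hm with h | h <;> simp [h]

end Processes

theorem crossing_below_min_null_pvalue_iff_general
    {X ι : Type*} [MeasurableSpace X] [Fintype ι] [DecidableEq ι]
    (P : Measure X)
    (M0 M1 : Finset ι) (hpart : M0 ∪ M1 = Finset.univ) (hdisj : Disjoint M0 M1)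
    (hM0 : M0.Nonempty)
    (δ : ι → ℝ → X → ℝ) (A : ι → ℝ → ℝ)
    (hvals : ∀ m, ∀ α ∈ Set.Icc (0:ℝ) 1, ∀ x, δ m α x = 0 ∨ δ m α x = 1)
    -- (D2)
    (hD2 : ∀ᵐ x ∂P, ∀ m, MonotoneOn (fun α => δ m α x) (Set.Icc 0 1) ∧
      ∀ α ∈ Set.Ico (0:ℝ) 1, ContinuousWithinAt (fun β => δ m β x) (Set.Ici α) α)
    -- (A1)–(A3)
    (hArange : ∀ m, ∀ α ∈ Set.Icc (0:ℝ) 1, A m α ∈ Set.Icc (0:ℝ) 1)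
    (hA1 : ∀ m, A m 0 = 0 ∧ A m 1 = 1)
    (hA2 : ∀ m, ContinuousOn (A m) (Set.Icc 0 1) ∧ StrictMonoOn (A m) (Set.Icc 0 1))
    (q : ℝ) :
    ∀ᵐ x ∂P,
      (alphaDag A δ q x < M0.inf' hM0 (fun m => genP A δ m x) ↔
        alphaPound M0 M1 A δ q x < M0.inf' hM0 (fun m => genP A δ m x)) := by
  filter_upwards [hD2] with x hx
  obtain ⟨m₀, hm₀⟩ := hM0
  refine sInf_sublevel_union_one_lt_iff_of_eqOn
    ((Finset.inf'_le _ hm₀).trans (genP_le_one m₀ x)) fun α hα hlt => ?_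
  refine Hone_eq_Htwo hpart hdisj fun m hm => ?_
  exact eq_zero_or_leftLim_eq_zero_of_lt_genP (hx m).1 (hvals m · · x)
    (hArange m α hα) (hA1 m).1 (hA2 m).2 hα (hlt.trans_le (Finset.inf'_le _ hm))

/-- **Set equality (eq2).** -/
theorem crossing_below_min_null_pvalue_iff
    {X ι : Type*} [MeasurableSpace X] [Fintype ι] [DecidableEq ι] [Nonempty ι]
    (P : Measure X) [IsProbabilityMeasure P]
    (M0 M1 : Finset ι) (hpart : M0 ∪ M1 = Finset.univ) (hdisj : Disjoint M0 M1)
    (hM0 : M0.Nonempty)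
    (δ : ι → ℝ → X → ℝ) (A : ι → ℝ → ℝ)
    (hmeas : ∀ m, ∀ α ∈ Set.Icc (0:ℝ) 1, Measurable (δ m α))
    (hvals : ∀ m, ∀ α ∈ Set.Icc (0:ℝ) 1, ∀ x, δ m α x = 0 ∨ δ m α x = 1)
    -- (D1)
    (hD1 : ∀ m, ∀ᵐ x ∂P, δ m 0 x = 0 ∧ δ m 1 x = 1)
    -- (D2)
    (hD2 : ∀ᵐ x ∂P, ∀ m, MonotoneOn (fun α => δ m α x) (Set.Icc 0 1) ∧
      ∀ α ∈ Set.Ico (0:ℝ) 1, ContinuousWithinAt (fun β => δ m β x) (Set.Ici α) α)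
    -- (A1)–(A3)
    (hArange : ∀ m, ∀ α ∈ Set.Icc (0:ℝ) 1, A m α ∈ Set.Icc (0:ℝ) 1)
    (hA1 : ∀ m, A m 0 = 0 ∧ A m 1 = 1)
    (hA2 : ∀ m, ContinuousOn (A m) (Set.Icc 0 1) ∧ StrictMonoOn (A m) (Set.Icc 0 1))
    (hA3 : ∀ α ∈ Set.Icc (0:ℝ) 1, 1 - α ≤ ∏ m, (1 - A m α))
    (q : ℝ) (hq : q ∈ Set.Icc (0:ℝ) 1) :
    ∀ᵐ x ∂P,
      (alphaDag A δ q x < M0.inf' hM0 (fun m => genP A δ m x) ↔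
        alphaPound M0 M1 A δ q x < M0.inf' hM0 (fun m => genP A δ m x)) :=
  crossing_below_min_null_pvalue_iff_general P M0 M1 hpart hdisj hM0 δ A hvals hD2 hArange hA1 hA2 q

end
end

section
/- Last-crossing inequality and FDP bound: for q ∈ (0,1], almost surely Σ_{m∈𝓜} A_m(α*(q)) ≤ q · S(α*(q)); consequently, almost surely F(α*(q)) ≤ q · (S₀(α*(q))/Σ_{m∈𝓜} A_m(α*(q))) · I{S(α*(q)) > 0}. More generally, if A• : [0,1] → ℝ is continuous with A•(0) = 0 and s : [0,1] → ℝ is nondecreasing, nonnegative and right-continuous, then a* = sup{α ∈ [0,1] : A•(α) ≤ q·s(α)} satisfies A•(a*) ≤ q·s(a*). -/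
/-!
Statement 15: Last-crossing inequality and FDP bound. For q ∈ (0,1], almost surely
Σ_m A_m(α*(q)) ≤ q·S(α*(q)) and hence F(α*(q)) ≤ q·(S₀(α*(q))/Σ_m A_m(α*(q)))·I{S(α*(q)) > 0}.
More generally, if A• is continuous with A•(0) = 0 and s is nondecreasing, nonnegative
and right-continuous, then a* = sup{α ∈ [0,1] : A•(α) ≤ q·s(α)} satisfies A•(a*) ≤ q·s(a*).
-/

open MeasureTheory Function Set

noncomputable section

/-- Deterministic last-crossing inequality. -/
lemma last_crossing_aux {q : ℝ} (hq : 0 < q) (Abull s : ℝ → ℝ)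
    (hAc : ContinuousOn Abull (Set.Icc 0 1)) (hA0 : Abull 0 = 0)
    (hs : MonotoneOn s (Set.Icc 0 1)) (hsn : ∀ α ∈ Set.Icc (0:ℝ) 1, 0 ≤ s α) :
    Abull (sSup (insert 0 {α ∈ Set.Icc (0:ℝ) 1 | Abull α ≤ q * s α})) ≤
      q * s (sSup (insert 0 {α ∈ Set.Icc (0:ℝ) 1 | Abull α ≤ q * s α})) := by
  set T := insert (0:ℝ) {α ∈ Set.Icc (0:ℝ) 1 | Abull α ≤ q * s α} with hT
  have hTsub : T ⊆ Set.Icc (0:ℝ) 1 := by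
    rintro a (rfl | ha)
    · exact ⟨le_rfl, zero_le_one⟩
    · exact ha.1
  have hTne : T.Nonempty := ⟨0, Set.mem_insert _ _⟩
  have hbdd : BddAbove T := ⟨1, fun a ha => (hTsub ha).2⟩
  set a := sSup T with ha_def
  have haIcc : a ∈ Set.Icc (0:ℝ) 1 :=
    ⟨le_csSup hbdd (Set.mem_insert _ _), csSup_le hTne fun b hb => (hTsub hb).2⟩
  set C := Set.Icc (0:ℝ) 1 ∩ Abull ⁻¹' Set.Iic (q * s a) with hC
  have hCclosed : IsClosed C :=
    hAc.preimage_isClosed_of_isClosed isClosed_Icc isClosed_Iic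
  have hTC : T ⊆ C := by
    rintro b (rfl | hb)
    · exact ⟨⟨le_rfl, zero_le_one⟩, by
        simp only [Set.mem_preimage, Set.mem_Iic, hA0]
        exact mul_nonneg hq.le (hsn a haIcc)⟩
    · refine ⟨hb.1, ?_⟩
      have hba : b ≤ a := le_csSup hbdd (Set.mem_insert_of_mem _ hb)
      have : s b ≤ s a := hs hb.1 haIcc hba
      exact Set.mem_Iic.2 (hb.2.trans (mul_le_mul_of_nonneg_left this hq.le))
  have haC : a ∈ C := by
    have h1 : a ∈ closure T := (isLUB_csSup hTne hbdd).mem_closure hTne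
    have : closure T ⊆ C := hCclosed.closure_subset_iff.2 hTC
    exact this h1
  exact haC.2

/-- **Last-crossing inequality and FDP bound.** -/
theorem last_crossing_and_fdp_bound
    {X ι : Type*} [MeasurableSpace X] [Fintype ι] [DecidableEq ι] [Nonempty ι]
    (P : Measure X) [IsProbabilityMeasure P]
    (M0 M1 : Finset ι) (hpart : M0 ∪ M1 = Finset.univ) (hdisj : Disjoint M0 M1)
    (δ : ι → ℝ → X → ℝ) (A : ι → ℝ → ℝ)
    (hmeas : ∀ m, ∀ α ∈ Set.Icc (0:ℝ) 1, Measurable (δ m α))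
    (hvals : ∀ m, ∀ α ∈ Set.Icc (0:ℝ) 1, ∀ x, δ m α x = 0 ∨ δ m α x = 1)
    (hδ0 : ∀ m, ∀ᵐ x ∂P, δ m 0 x = 0)
    -- (D2)
    (hD2 : ∀ᵐ x ∂P, ∀ m, MonotoneOn (fun α => δ m α x) (Set.Icc 0 1) ∧
      ∀ α ∈ Set.Ico (0:ℝ) 1, ContinuousWithinAt (fun β => δ m β x) (Set.Ici α) α)
    -- (A1)–(A2)
    (hArange : ∀ m, ∀ α ∈ Set.Icc (0:ℝ) 1, A m α ∈ Set.Icc (0:ℝ) 1)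
    (hA1 : ∀ m, A m 0 = 0 ∧ A m 1 = 1)
    (hA2 : ∀ m, ContinuousOn (A m) (Set.Icc 0 1) ∧ StrictMonoOn (A m) (Set.Icc 0 1))
    (q : ℝ) (hq : q ∈ Set.Ioc (0:ℝ) 1) :
    -- a.s. last-crossing inequality and the resulting false discovery proportion bound
    (∀ᵐ x ∂P,
      (∑ m, A m (alphaStar A δ q x)) ≤ q * Stot A δ (alphaStar A δ q x) x ∧
      Fprop M0 A δ (alphaStar A δ q x) x ≤
        q * (if 0 < Stot A δ (alphaStar A δ q x) x then
              Szero M0 A δ (alphaStar A δ q x) x / ∑ m, A m (alphaStar A δ q x)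
            else 0)) ∧
    -- the general deterministic last-crossing inequality
    (∀ Abull s : ℝ → ℝ, ContinuousOn Abull (Set.Icc 0 1) → Abull 0 = 0 →
      MonotoneOn s (Set.Icc 0 1) → (∀ α ∈ Set.Icc (0:ℝ) 1, 0 ≤ s α) →
      (∀ α ∈ Set.Ico (0:ℝ) 1, ContinuousWithinAt s (Set.Ici α) α) →
      Abull (sSup (insert 0 {α ∈ Set.Icc (0:ℝ) 1 | Abull α ≤ q * s α})) ≤
        q * s (sSup (insert 0 {α ∈ Set.Icc (0:ℝ) 1 | Abull α ≤ q * s α}))) := by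
  constructor
  · filter_upwards [hD2, MeasureTheory.ae_all_iff.2 hδ0] with x hx hx0
    -- set up the deterministic data for this x
    set Ab : ℝ → ℝ := fun α => ∑ m, A m α with hAb
    set sx : ℝ → ℝ := fun α => Stot A δ α x with hsx
    have hAc : ContinuousOn Ab (Set.Icc 0 1) :=
      continuousOn_finset_sum _ fun m _ => (hA2 m).1
    have hA0 : Ab 0 = 0 := by
      simp only [hAb]
      exact Finset.sum_eq_zero fun m _ => (hA1 m).1
    have hmono : MonotoneOn sx (Set.Icc 0 1) := by
      intro α hα β hβ hαβ
      refine Finset.sum_le_sum fun m _ => ?_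
      exact (hx m).1 (hArange m α hα) (hArange m β hβ)
        (((hA2 m).2.monotoneOn) hα hβ hαβ)
    have hnonneg : ∀ α ∈ Set.Icc (0:ℝ) 1, 0 ≤ sx α := by
      intro α hα
      refine Finset.sum_nonneg fun m _ => ?_
      rcases hvals m (A m α) (hArange m α hα) x with h | h <;> simp [h]
    have hmain : Ab (alphaStar A δ q x) ≤ q * sx (alphaStar A δ q x) :=
      last_crossing_aux hq.1 Ab sx hAc hA0 hmono hnonneg
    have haIcc : alphaStar A δ q x ∈ Set.Icc (0:ℝ) 1 := by
      unfold alphaStar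
      constructor
      · refine le_csSup ⟨1, ?_⟩ (Set.mem_insert _ _)
        rintro b (rfl | hb)
        · exact zero_le_one
        · exact hb.1.2
      · refine csSup_le ⟨0, Set.mem_insert _ _⟩ ?_
        rintro b (rfl | hb)
        · exact zero_le_one
        · exact hb.1.2
    refine ⟨hmain, ?_⟩
    set a := alphaStar A δ q x
    by_cases hS : 0 < Stot A δ a x
    · have hS0 : 0 ≤ Szero M0 A δ a x := by
        refine Finset.sum_nonneg fun m _ => ?_
        rcases hvals m (A m a) (hArange m a haIcc) x with h | h <;> simp [h]
      have hApos : 0 < Ab a := by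
        rcases lt_or_eq_of_le haIcc.1 with hlt | heq
        · have : A (Classical.arbitrary ι) 0 < A (Classical.arbitrary ι) a :=
            (hA2 _).2 ⟨le_rfl, zero_le_one⟩ haIcc hlt
          rw [(hA1 _).1] at this
          refine Finset.sum_pos' (fun m _ => (hArange m a haIcc).1) ?_
          exact ⟨Classical.arbitrary ι, Finset.mem_univ _, this⟩
        · exfalso
          apply absurd hS
          rw [not_lt, ← heq]
          have : Stot A δ 0 x = 0 := by
            unfold Stot
            refine Finset.sum_eq_zero fun m _ => ?_
            rw [(hA1 m).1, hx0 m]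
          rw [this]
      simp only [Fprop, hS, if_pos]
      have hrw : q * (Szero M0 A δ a x / ∑ m, A m a)
          = (q * Szero M0 A δ a x) / (∑ m, A m a) := by ring
      rw [hrw, div_le_div_iff₀ hS hApos]
      have h1 : Szero M0 A δ a x * Ab a ≤ Szero M0 A δ a x * (q * sx a) :=
        mul_le_mul_of_nonneg_left hmain hS0
      calc Szero M0 A δ a x * ∑ m, A m a ≤ Szero M0 A δ a x * (q * Stot A δ a x) := h1
        _ = q * Szero M0 A δ a x * Stot A δ a x := by ring
    · simp [Fprop, hS]
  · intro Abull s hc h0 hm hn _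
    exact last_crossing_aux hq.1 Abull s hc h0 hm hn

end
end
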